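/- arXiv:0709.2895 — 12 statements merged into one kernel-verified Lean document; each statement's English description precedes it below -/
import Mathlib

section
/- Every ω-cover of a product space X × Y of separable metric spaces is refined by an ω-cover of X × Y all of whose elements are of the form U × V where U is open in X and V is open in Y. -/
open Set Filter Topology TopologicalSpace

/-- `𝒰` is an open cover of the space `Z`. -/
def IsOpenCover {Z : Type*} [TopologicalSpace Z] (𝒰 : Set (Set Z)) : Prop :=
  (∀ U ∈ 𝒰, IsOpen U) ∧ ⋃₀ 𝒰 = univ

/-- `𝒰` is an ω-cover: an open cover, not containing the whole space,
such that every finite subset of the space is contained in a member. -/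
def IsOmegaCover {Z : Type*} [TopologicalSpace Z] (𝒰 : Set (Set Z)) : Prop :=
  IsOpenCover 𝒰 ∧ univ ∉ 𝒰 ∧ ∀ F : Set Z, F.Finite → ∃ U ∈ 𝒰, F ⊆ U

/-- The Menger property `S_fin(𝒪,𝒪)`. -/
def Menger (Z : Type*) [TopologicalSpace Z] : Prop :=
  ∀ 𝒰 : ℕ → Set (Set Z), (∀ n, IsOpenCover (𝒰 n)) →
    ∃ 𝒱 : ℕ → Set (Set Z), (∀ n, (𝒱 n).Finite ∧ 𝒱 n ⊆ 𝒰 n) ∧ ⋃₀ (⋃ n, 𝒱 n) = univ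

/-- The Rothberger property `S_1(𝒪,𝒪)`. -/
def Rothberger (Z : Type*) [TopologicalSpace Z] : Prop :=
  ∀ 𝒰 : ℕ → Set (Set Z), (∀ n, IsOpenCover (𝒰 n)) →
    ∃ U : ℕ → Set Z, (∀ n, U n ∈ 𝒰 n) ∧ (⋃ n, U n) = univ

/-- Selective screenability `S_c(𝒪,𝒪)`. -/
def SelScreenable (Z : Type*) [TopologicalSpace Z] : Prop :=
  ∀ 𝒰 : ℕ → Set (Set Z), (∀ n, IsOpenCover (𝒰 n)) →
    ∃ 𝒱 : ℕ → Set (Set Z),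
      (∀ n, (𝒱 n).PairwiseDisjoint id ∧ (∀ V ∈ 𝒱 n, IsOpen V) ∧
        (∀ V ∈ 𝒱 n, ∃ U ∈ 𝒰 n, V ⊆ U)) ∧
      ⋃₀ (⋃ n, 𝒱 n) = univ

/-- The Hurewicz property. -/
def Hurewicz (Z : Type*) [TopologicalSpace Z] : Prop :=
  ∀ 𝒰 : ℕ → Set (Set Z), (∀ n, IsOpenCover (𝒰 n)) →
    ∃ 𝒱 : ℕ → Set (Set Z), (∀ n, (𝒱 n).Finite ∧ 𝒱 n ⊆ 𝒰 n) ∧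
      ∀ z : Z, ∀ᶠ n in atTop, z ∈ ⋃₀ 𝒱 n

/-- `𝒰` is a γ-cover: an infinite family of open sets such that every point
lies in all but finitely many members. -/
def IsGammaCover {Z : Type*} [TopologicalSpace Z] (𝒰 : Set (Set Z)) : Prop :=
  𝒰.Infinite ∧ (∀ U ∈ 𝒰, IsOpen U) ∧ ∀ z : Z, {U ∈ 𝒰 | z ∉ U}.Finite

/-- `S_1(Ω,Γ)`: from every sequence of ω-covers one can pick one member each
so that the selections form a γ-cover (the γ-set property). -/
def S1OmegaGamma (Z : Type*) [TopologicalSpace Z] : Prop :=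
  ∀ 𝒰 : ℕ → Set (Set Z), (∀ n, IsOmegaCover (𝒰 n)) →
    ∃ U : ℕ → Set Z, (∀ n, U n ∈ 𝒰 n) ∧ IsGammaCover (range U)

/-- `S_1(Ω,𝒪^gp)`: from every sequence of ω-covers one can pick one member each
so that the selections form a groupable cover. -/
def S1OmegaGp (Z : Type*) [TopologicalSpace Z] : Prop :=
  ∀ 𝒰 : ℕ → Set (Set Z), (∀ n, IsOmegaCover (𝒰 n)) →
    ∃ V : ℕ → Set Z, (∀ n, V n ∈ 𝒰 n) ∧
      ∃ f : ℕ → ℕ, StrictMono f ∧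
        ∀ z : Z, ∀ᶠ k in atTop, ∃ j ∈ Set.Ico (f k) (f (k + 1)), z ∈ V j

/-- TWO has a winning strategy in the length-`α` game `G_1^α(𝒪,𝒪)` on `Z`:
a history-dependent selection rule whose picks are legal and cover `Z`
whenever ONE plays open covers. -/
def TwoWinsG1 (Z : Type*) [TopologicalSpace Z] (α : Ordinal.{0}) : Prop :=
  ∃ σ : (Ordinal.{0} → Set (Set Z)) → Ordinal.{0} → Set Z,
    (∀ O O' : Ordinal.{0} → Set (Set Z), ∀ γ, (∀ β ≤ γ, O β = O' β) → σ O γ = σ O' γ) ∧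
    ∀ O : Ordinal.{0} → Set (Set Z), (∀ γ, γ < α → IsOpenCover (O γ)) →
      (∀ γ, γ < α → σ O γ ∈ O γ) ∧ ∀ z : Z, ∃ γ, γ < α ∧ z ∈ σ O γ

/-- TWO has a winning strategy in the length-`α` game `G_fin^α(𝒪,𝒪)` on `Z`. -/
def TwoWinsGfin (Z : Type*) [TopologicalSpace Z] (α : Ordinal.{0}) : Prop :=
  ∃ σ : (Ordinal.{0} → Set (Set Z)) → Ordinal.{0} → Set (Set Z),
    (∀ O O' : Ordinal.{0} → Set (Set Z), ∀ γ, (∀ β ≤ γ, O β = O' β) → σ O γ = σ O' γ) ∧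
    ∀ O : Ordinal.{0} → Set (Set Z), (∀ γ, γ < α → IsOpenCover (O γ)) →
      (∀ γ, γ < α → (σ O γ).Finite ∧ σ O γ ⊆ O γ) ∧
      ∀ z : Z, ∃ γ, γ < α ∧ z ∈ ⋃₀ σ O γ

/-- A Lusin set: an uncountable set of reals meeting every nowhere dense set
in a countable set. -/
def IsLusin (L : Set ℝ) : Prop :=
  ¬ L.Countable ∧ ∀ N : Set ℝ, IsNowhereDense N → (L ∩ N).Countable

/-- A Sierpiński set: an uncountable set of reals meeting every Lebesgue null
set in a countable set. -/
def IsSierpinski (S : Set ℝ) : Prop :=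
  ¬ S.Countable ∧ ∀ N : Set ℝ, MeasureTheory.volume N = 0 → (S ∩ N).Countable

/-- Every ω-cover of a product of separable metric spaces is refined by an
ω-cover whose members are open rectangles. -/
theorem omegaCover_refined_by_rectangles
    {X Y : Type*} [MetricSpace X] [SeparableSpace X]
    [MetricSpace Y] [SeparableSpace Y]
    (𝒰 : Set (Set (X × Y))) (h𝒰 : IsOmegaCover 𝒰) :
    ∃ 𝒱 : Set (Set (X × Y)), IsOmegaCover 𝒱 ∧
      (∀ W ∈ 𝒱, ∃ U ∈ 𝒰, W ⊆ U) ∧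
      (∀ W ∈ 𝒱, ∃ (U : Set X) (V : Set Y), IsOpen U ∧ IsOpen V ∧ W = U ×ˢ V) := by
  obtain ⟨⟨hopen, -⟩, hne, hfin⟩ := h𝒰
  -- key: finite rectangles inside an open set can be fattened to open rectangles
  have key : ∀ (A : Set X) (B : Set Y), A.Finite → B.Finite → ∀ W : Set (X × Y),
      IsOpen W → A ×ˢ B ⊆ W →
      ∃ U V, IsOpen U ∧ IsOpen V ∧ A ⊆ U ∧ B ⊆ V ∧ U ×ˢ V ⊆ W := by
    intro A B hA hB W hW hsub
    have h1 : ∀ a ∈ A, ∀ b ∈ B, ∃ (U : Set X) (V : Set Y),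
        IsOpen U ∧ IsOpen V ∧ a ∈ U ∧ b ∈ V ∧ U ×ˢ V ⊆ W := by
      intro a ha b hb
      have hmem : (a, b) ∈ W := hsub ⟨ha, hb⟩
      rcases isOpen_prod_iff.mp hW a b hmem with ⟨U, V, hU, hV, haU, hbV, hUV⟩
      exact ⟨U, V, hU, hV, haU, hbV, hUV⟩
    choose! u v hu hv hau hbv huv using h1
    refine ⟨⋃ a ∈ A, ⋂ b ∈ B, u a b, ⋃ b ∈ B, ⋂ a ∈ A, v a b, ?_, ?_, ?_, ?_, ?_⟩
    · exact isOpen_biUnion fun a ha => hB.isOpen_biInter fun b hb => hu a ha b hb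
    · exact isOpen_biUnion fun b hb => hA.isOpen_biInter fun a ha => hv a ha b hb
    · intro a ha
      exact mem_biUnion ha (mem_iInter₂.mpr fun b hb => hau a ha b hb)
    · intro b hb
      exact mem_biUnion hb (mem_iInter₂.mpr fun a ha => hbv a ha b hb)
    · rintro ⟨x, y⟩ ⟨hx, hy⟩
      simp only [mem_iUnion, mem_iInter] at hx hy
      obtain ⟨a, ha, hx⟩ := hx
      obtain ⟨b, hb, hy⟩ := hy
      exact huv a ha b hb ⟨hx b hb, hy a ha⟩
  set 𝒱 : Set (Set (X × Y)) :=
    {R | ∃ (U : Set X) (V : Set Y), IsOpen U ∧ IsOpen V ∧ R = U ×ˢ V ∧ ∃ W ∈ 𝒰, R ⊆ W}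
    with h𝒱
  have hFin : ∀ F : Set (X × Y), F.Finite → ∃ R ∈ 𝒱, F ⊆ R := by
    intro F hF
    have hA : (Prod.fst '' F).Finite := hF.image _
    have hB : (Prod.snd '' F).Finite := hF.image _
    obtain ⟨W, hW𝒰, hWsub⟩ := hfin ((Prod.fst '' F) ×ˢ (Prod.snd '' F)) (hA.prod hB)
    obtain ⟨U, V, hU, hV, hAU, hBV, hUVW⟩ :=
      key _ _ hA hB W (hopen W hW𝒰) hWsub
    refine ⟨U ×ˢ V, ⟨U, V, hU, hV, rfl, W, hW𝒰, hUVW⟩, ?_⟩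
    intro p hp
    exact ⟨hAU ⟨p, hp, rfl⟩, hBV ⟨p, hp, rfl⟩⟩
  refine ⟨𝒱, ⟨⟨?_, ?_⟩, ?_, hFin⟩, ?_, ?_⟩
  · rintro R ⟨U, V, hU, hV, rfl, -⟩
    exact hU.prod hV
  · apply eq_univ_of_forall
    intro p
    obtain ⟨R, hR, hpR⟩ := hFin {p} (finite_singleton p)
    exact ⟨R, hR, hpR rfl⟩
  · rintro ⟨U, V, hU, hV, heq, W, hW𝒰, hsub⟩
    have : W = univ := eq_univ_of_univ_subset hsub
    exact hne (this ▸ hW𝒰)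
  · rintro R ⟨U, V, hU, hV, rfl, W, hW𝒰, hsub⟩
    exact ⟨W, hW𝒰, hsub⟩
  · rintro R ⟨U, V, hU, hV, rfl, -⟩
    exact ⟨U, V, hU, hV, rfl⟩
end

section
/- If X is a σ-compact separable metric space and Y is a separable metric space with the Menger property S_fin(𝒪,𝒪), then X × Y has the Menger property. -/
open Set Filter Topology TopologicalSpace

/-- If `X` is σ-compact and `Y` has the Menger property, then `X × Y` is Menger. -/
theorem menger_prod_of_sigmaCompact
    {X Y : Type*} [MetricSpace X] [SeparableSpace X] [SigmaCompactSpace X]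
    [MetricSpace Y] [SeparableSpace Y] (hY : Menger Y) :
    Menger (X × Y) := by
  classical
  intro 𝒰 h𝒰
  set e : ℕ × ℕ ≃ ℕ := Nat.pairEquiv with he
  set K : ℕ → Set X := compactCovering X with hK
  set 𝒲 : ℕ → ℕ → Set (Set Y) := fun m n =>
    {V : Set Y | IsOpen V ∧ ∃ F : Set (Set (X × Y)), F.Finite ∧ F ⊆ 𝒰 n ∧
      (K m) ×ˢ V ⊆ ⋃₀ F} with h𝒲
  have hW : ∀ m n, IsOpenCover (𝒲 m n) := by
    intro m n
    constructor
    · intro V hV; exact hV.1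
    · apply eq_univ_of_forall
      intro y
      have hKc : IsCompact (K m) := isCompact_compactCovering X m
      have hcov : (K m) ×ˢ ({y} : Set Y) ⊆ ⋃ U : 𝒰 n, (U : Set (X × Y)) := by
        intro p _
        have hp : p ∈ ⋃₀ 𝒰 n := by rw [(h𝒰 n).2]; trivial
        obtain ⟨U, hU, hpU⟩ := hp
        exact mem_iUnion.2 ⟨⟨U, hU⟩, hpU⟩
      obtain ⟨t, ht⟩ := (hKc.prod isCompact_singleton).elim_finite_subcover
        (fun U : 𝒰 n => (U : Set (X × Y))) (fun U => (h𝒰 n).1 U U.2) hcov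
      set F : Set (Set (X × Y)) := Subtype.val '' (t : Set (𝒰 n)) with hF
      have hFfin : F.Finite := t.finite_toSet.image _
      have hFsub : F ⊆ 𝒰 n := by
        rintro U ⟨⟨U', hU'⟩, _, rfl⟩; exact hU'
      have hFopen : IsOpen (⋃₀ F) :=
        isOpen_sUnion fun U hU => (h𝒰 n).1 U (hFsub hU)
      have hcov2 : (K m) ×ˢ ({y} : Set Y) ⊆ ⋃₀ F := by
        intro p hp
        obtain ⟨U, hUt, hpU⟩ := mem_iUnion₂.1 (ht hp)
        exact ⟨U, ⟨U, hUt, rfl⟩, hpU⟩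
      obtain ⟨u, v, hu, hv, hKu, hyv, huv⟩ :=
        generalized_tube_lemma hKc isCompact_singleton hFopen hcov2
      refine mem_sUnion.2 ⟨v, ⟨hv, F, hFfin, hFsub, ?_⟩, hyv rfl⟩
      exact (Set.prod_mono hKu subset_rfl).trans huv
  have hsel : ∀ m, ∃ 𝒱 : ℕ → Set (Set Y),
      (∀ k, (𝒱 k).Finite ∧ 𝒱 k ⊆ 𝒲 m (e (m, k))) ∧ ⋃₀ (⋃ k, 𝒱 k) = univ :=
    fun m => hY (fun k => 𝒲 m (e (m, k))) (fun k => hW m (e (m, k)))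
  choose 𝒱Y h𝒱Y1 h𝒱Y2 using hsel
  have hFex : ∀ m k, ∀ V ∈ 𝒱Y m k, ∃ F : Set (Set (X × Y)), F.Finite ∧
      F ⊆ 𝒰 (e (m, k)) ∧ (K m) ×ˢ V ⊆ ⋃₀ F :=
    fun m k V hV => ((h𝒱Y1 m k).2 hV).2
  choose F hFfin hFsub hFcov using hFex
  refine ⟨fun n => ⋃ (V : ↥(𝒱Y (e.symm n).1 (e.symm n).2)),
    F (e.symm n).1 (e.symm n).2 V V.2, fun n => ⟨?_, ?_⟩, ?_⟩
  · have : Finite ↥(𝒱Y (e.symm n).1 (e.symm n).2) :=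
      (h𝒱Y1 (e.symm n).1 (e.symm n).2).1
    exact Set.finite_iUnion fun V => hFfin _ _ _ _
  · intro U hU
    obtain ⟨V, hUV⟩ := mem_iUnion.1 hU
    have := hFsub (e.symm n).1 (e.symm n).2 V V.2 hUV
    rwa [Prod.mk.eta, e.apply_symm_apply] at this
  · apply eq_univ_of_forall
    rintro ⟨x, y⟩
    obtain ⟨m, hxm⟩ := exists_mem_compactCovering x
    have hy : y ∈ ⋃₀ (⋃ k, 𝒱Y m k) := by rw [h𝒱Y2 m]; trivial
    obtain ⟨V, hVmem, hyV⟩ := hy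
    obtain ⟨k, hVk⟩ := mem_iUnion.1 hVmem
    have hxy : (x, y) ∈ ⋃₀ F m k V hVk :=
      hFcov m k V hVk (mk_mem_prod hxm hyV)
    obtain ⟨U, hUF, hxyU⟩ := hxy
    refine ⟨U, ?_, hxyU⟩
    refine mem_iUnion.2 ⟨e (m, k), ?_⟩
    rw [show e.symm (e (m, k)) = (m, k) from e.symm_apply_apply _]
    exact mem_iUnion.2 ⟨⟨V, hVk⟩, hUF⟩
end

section
/- A separable metric space has the Menger property S_fin(𝒪,𝒪) if and only if it satisfies S_fin(Ω,𝒪), the corresponding selection principle with ω-covers as inputs. -/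
open Set Filter Topology TopologicalSpace

/-- Menger's property `S_fin(𝒪,𝒪)` is equivalent to `S_fin(Ω,𝒪)`. -/
theorem menger_iff_sfin_omega
    {X : Type*} [MetricSpace X] [SeparableSpace X] :
    Menger X ↔
      (∀ 𝒰 : ℕ → Set (Set X), (∀ n, IsOmegaCover (𝒰 n)) →
        ∃ 𝒱 : ℕ → Set (Set X), (∀ n, (𝒱 n).Finite ∧ 𝒱 n ⊆ 𝒰 n) ∧
          ⋃₀ (⋃ n, 𝒱 n) = univ) := by
  constructor
  · intro hM 𝒰 h
    exact hM 𝒰 (fun n => (h n).1)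
  · intro h 𝒰 h𝒰
    by_cases hfin : ∃ n, ∃ F : Set (Set X), F.Finite ∧ F ⊆ 𝒰 n ∧ ⋃₀ F = univ
    · obtain ⟨n, F, hFf, hFs, hFc⟩ := hfin
      refine ⟨fun m => if m = n then F else ∅, ?_, ?_⟩
      · intro m; by_cases hm : m = n <;> simp [hm, hFf, hFs]
      · apply eq_univ_of_univ_subset
        rw [← hFc]
        apply sUnion_subset_sUnion
        intro U hU
        exact mem_iUnion.2 ⟨n, by simp [hU]⟩
    · push_neg at hfin
      set 𝒲 : ℕ → Set (Set X) :=
        fun n => { W | ∃ F : Set (Set X), F.Finite ∧ F ⊆ 𝒰 n ∧ W = ⋃₀ F } with h𝒲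
      have hsub : ∀ n, 𝒰 n ⊆ 𝒲 n := by
        intro n U hU
        exact ⟨{U}, finite_singleton U, by simpa using hU, by simp⟩
      have hω : ∀ n, IsOmegaCover (𝒲 n) := by
        intro n
        refine ⟨⟨?_, ?_⟩, ?_, ?_⟩
        · rintro W ⟨F, hFf, hFs, rfl⟩
          exact isOpen_sUnion fun U hU => (h𝒰 n).1 U (hFs hU)
        · apply eq_univ_of_univ_subset
          rw [← (h𝒰 n).2]
          exact sUnion_subset_sUnion (hsub n)
        · rintro ⟨F, hFf, hFs, hFc⟩
          exact hfin n F hFf hFs hFc.symm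
        · intro F hF
          have hg : ∀ x : X, ∃ U, U ∈ 𝒰 n ∧ x ∈ U := by
            intro x
            have : x ∈ ⋃₀ 𝒰 n := (h𝒰 n).2 ▸ mem_univ x
            obtain ⟨U, hU, hx⟩ := this
            exact ⟨U, hU, hx⟩
          choose g hg1 hg2 using hg
          refine ⟨⋃₀ (g '' F), ⟨g '' F, hF.image g, ?_, rfl⟩, ?_⟩
          · rintro _ ⟨x, _, rfl⟩; exact hg1 x
          · intro x hx
            exact ⟨g x, ⟨x, hx, rfl⟩, hg2 x⟩
      obtain ⟨𝒱', h𝒱', h𝒱'c⟩ := h 𝒲 hω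
      have hc : ∀ n (W : Set X), ∃ F : Set (Set X),
          F.Finite ∧ F ⊆ 𝒰 n ∧ (W ∈ 𝒱' n → W = ⋃₀ F) := by
        intro n W
        by_cases hW : W ∈ 𝒱' n
        · obtain ⟨F, hF1, hF2, hF3⟩ := (h𝒱' n).2 hW
          exact ⟨F, hF1, hF2, fun _ => hF3⟩
        · exact ⟨∅, finite_empty, empty_subset _, fun hh => absurd hh hW⟩
      choose Fc hFc1 hFc2 hFc3 using hc
      refine ⟨fun n => ⋃ W ∈ 𝒱' n, Fc n W, ?_, ?_⟩
      · intro n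
        constructor
        · exact (h𝒱' n).1.biUnion fun W _ => hFc1 n W
        · exact iUnion₂_subset fun W _ => hFc2 n W
      · apply eq_univ_of_forall
        intro x
        have hx : x ∈ ⋃₀ (⋃ n, 𝒱' n) := h𝒱'c ▸ mem_univ x
        obtain ⟨W, hW, hxW⟩ := hx
        obtain ⟨n, hWn⟩ := mem_iUnion.1 hW
        have := hFc3 n W hWn
        rw [this] at hxW
        obtain ⟨U, hU, hxU⟩ := hxW
        exact ⟨U, mem_iUnion.2 ⟨n, mem_iUnion₂.2 ⟨W, hWn, hU⟩⟩, hxU⟩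
end

section
/- If player TWO has a winning strategy in the length-ω game G_1^ω(𝒪,𝒪) on a separable metric space X, then X is countable. -/
open Set Filter Topology TopologicalSpace

/-!
For every history of the game there is a point `x` such that ONE can force TWO's next pick
into any neighbourhood of `x`: otherwise ONE plays the cover by neighbourhoods witnessing the
failure at each point, and TWO's legal answer is one of them. Fixing such a point for each
history and, for each basic open set around it, a cover forcing TWO inside that set, ONE only
ever needs countably many histories. A point outside the countably many chosen points is
separated from each of them by a basic open set, so ONE can force TWO's every pick to miss it,
and TWO loses.
-/

abbrev OpenCovers (X : Type*) [TopologicalSpace X] := {𝒰 : Set (Set X) // _root_.IsOpenCover 𝒰}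

instance {X : Type*} [TopologicalSpace X] : Inhabited (OpenCovers X) :=
  ⟨⟨{univ}, by simp, by simp⟩⟩

section

variable {M ι X : Type*}

theorem countable_of_forall_ne_exists_move_avoiding [Countable ι] {τ : List M → M → Set X}
    (hwin : ∀ c : ℕ → M, ∀ x, ∃ n, x ∈ τ ((List.range n).map c) (c n))
    (pt : List M → X) (move : List M → ι → M)
    (havoid : ∀ l x, x ≠ pt l → ∃ i, x ∉ τ l (move l i)) :
    Countable X := by
  let hist : List ι → List M := List.foldr (fun i l => l ++ [move l i]) []
  suffices Function.Surjective (pt ∘ hist) from this.countable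
  intro x
  by_contra! hx
  choose next hnext using fun t => havoid (hist t) x (hx t).symm
  let T : ℕ → List ι := fun k => (fun t => next t :: t)^[k] []
  let c : ℕ → M := fun k => move (hist (T k)) (next (T k))
  have hist_T : ∀ k, hist (T k) = (List.range k).map c := by
    intro k
    induction k with
    | zero => rfl
    | succ k ih =>
      simp only [T, Function.iterate_succ_apply', List.range_succ, List.map_append, ← ih]
      rfl
  obtain ⟨n, hn⟩ := hwin c x
  rw [← hist_T] at hn
  exact hnext (T n) hn

end

section

variable {X : Type*} [TopologicalSpace X]

theorem exists_forall_mem_nhds_exists_subset (r : OpenCovers X → Set X)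
    (hr : ∀ 𝒰, r 𝒰 ∈ 𝒰.1) : ∃ x, ∀ U ∈ 𝓝 x, ∃ 𝒰, r 𝒰 ⊆ U := by
  by_contra! hbad
  choose U hU hrU using hbad
  let 𝒰 : OpenCovers X :=
    ⟨range fun x => interior (U x), by
      refine ⟨?_, eq_univ_of_forall fun x => ?_⟩
      · rintro _ ⟨x, rfl⟩
        exact isOpen_interior
      · exact ⟨_, ⟨x, rfl⟩, mem_interior_iff_mem_nhds.2 (hU x)⟩⟩
  obtain ⟨x, hx⟩ := hr 𝒰
  exact hrU x 𝒰 (hx ▸ interior_subset)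

theorem exists_forall_ne_exists_move_avoiding [SecondCountableTopology X] [T1Space X]
    {M : Type*} {τ : M → OpenCovers X → Set X} (hτ : ∀ l 𝒰, τ l 𝒰 ∈ 𝒰.1) :
    ∃ (pt : M → X) (move : M → countableBasis X → OpenCovers X),
      ∀ l x, x ≠ pt l → ∃ B, x ∉ τ l (move l B) := by
  choose pt hpt using fun l => exists_forall_mem_nhds_exists_subset (τ l) (hτ l)
  have hmove : ∀ l (B : countableBasis X), ∃ 𝒰, pt l ∈ B.1 → τ l 𝒰 ⊆ B := by
    intro l B
    by_cases h : pt l ∈ B.1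
    · obtain ⟨𝒰, h𝒰⟩ := hpt l B (((isBasis_countableBasis X).isOpen B.2).mem_nhds h)
      exact ⟨𝒰, fun _ => h𝒰⟩
    · exact ⟨default, fun h' => absurd h' h⟩
  choose move hmove using hmove
  refine ⟨pt, move, fun l x hx => ?_⟩
  obtain ⟨B, hB, hptB, hBx⟩ := (isBasis_countableBasis X).exists_subset_of_mem_open
    (mem_compl_singleton_iff.2 hx.symm) isOpen_compl_singleton
  exact ⟨⟨B, hB⟩, fun hxB => hBx (hmove l ⟨B, hB⟩ hptB hxB) rfl⟩

/-- The values at `γ ≥ ω` are junk (`∅`). -/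
noncomputable def ordinalPlay (c : ℕ → OpenCovers X) : Ordinal.{0} → Set (Set X) :=
  Function.extend Nat.cast (fun n => (c n).1) fun _ => ∅

theorem ordinalPlay_natCast (c : ℕ → OpenCovers X) (n : ℕ) :
    ordinalPlay c n = c n :=
  Nat.cast_injective.extend_apply _ _ n

theorem isOpenCover_ordinalPlay (c : ℕ → OpenCovers X) {γ : Ordinal.{0}}
    (hγ : γ < Ordinal.omega0) : _root_.IsOpenCover (ordinalPlay c γ) := by
  obtain ⟨n, rfl⟩ := Ordinal.lt_omega0.1 hγ
  rw [ordinalPlay_natCast]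
  exact (c n).2

/-- `τ l 𝒰` is TWO's answer to `𝒰` after ONE's earlier moves `l`. -/
theorem TwoWinsG1.exists_listStrategy (h : TwoWinsG1 X Ordinal.omega0) :
    ∃ τ : List (OpenCovers X) → OpenCovers X → Set X, (∀ l 𝒰, τ l 𝒰 ∈ 𝒰.1) ∧
      ∀ c : ℕ → OpenCovers X, ∀ x, ∃ n, x ∈ τ ((List.range n).map c) (c n) := by
  obtain ⟨σ, hσ, hwin⟩ := h
  refine ⟨fun l 𝒰 => σ (ordinalPlay fun n => (l ++ [𝒰]).getD n default) l.length,
    fun l 𝒰 => ?_, fun c x => ?_⟩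
  · let p n := (l ++ [𝒰]).getD n default
    have := (hwin (ordinalPlay p) fun _ => isOpenCover_ordinalPlay p).1 l.length
      (Ordinal.natCast_lt_omega0 _)
    simpa [p, ordinalPlay_natCast] using this
  · obtain ⟨γ, hγ, hxγ⟩ := (hwin _ fun _ => isOpenCover_ordinalPlay c).2 x
    obtain ⟨n, rfl⟩ := Ordinal.lt_omega0.1 hγ
    refine ⟨n, ?_⟩
    convert hxγ using 1
    simp only [List.length_map, List.length_range]
    refine hσ _ _ n fun β hβ => ?_
    obtain ⟨m, rfl⟩ := Ordinal.lt_omega0.1 (hβ.trans_lt (Ordinal.natCast_lt_omega0 n))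
    have hmn : m < n + 1 := Nat.lt_succ_of_le (by exact_mod_cast hβ)
    rw [ordinalPlay_natCast, ordinalPlay_natCast, ← List.map_singleton, ← List.map_append,
      ← List.range_succ, List.getD_eq_getElem _ _ (by simpa using hmn)]
    simp

end

/-- Galvin–Telgársky: if TWO has a winning strategy in `G_1^ω(𝒪,𝒪)` on `X`,
then `X` is countable. -/
theorem countable_of_twoWinsG1_omega
    {X : Type*} [MetricSpace X] [SeparableSpace X]
    (h : TwoWinsG1 X Ordinal.omega0) :
    Countable X := by
  have := UniformSpace.secondCountable_of_separable X
  obtain ⟨τ, hlegal, hwin⟩ := h.exists_listStrategy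
  obtain ⟨pt, move, havoid⟩ := exists_forall_ne_exists_move_avoiding hlegal
  exact countable_of_forall_ne_exists_move_avoiding hwin pt move havoid
end

section
/- If player TWO has a winning strategy in the length-ω game G_fin^ω(𝒪,𝒪) on a separable metric space X, then X is σ-compact. -/
open Set Filter Topology TopologicalSpace

/-!
Telgársky's argument. Given a position of the game, let `K` be the set of points lying in the
closure of TWO's answer to every open cover ONE may play next. `K` is closed, and it is compact:
if ONE plays the open sets whose closures refine a cover `𝒰`, the closures of TWO's finitely many
answers cover `K`, and each lies in a member of `𝒰`. In a hereditarily Lindelöf space countably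
many covers of ONE already cut out `K`, so restricting ONE to them gives a countably branching
tree of positions. If some point avoided the kernels of all positions, ONE could walk down the
tree, each time playing a cover whose answer keeps the point out of its closure, and would beat
TWO's strategy. So countably many compact kernels cover the space.
-/

open Function

section Kernel

variable {X : Type*} [TopologicalSpace X]

lemma isCompact_of_isClosed_of_forall_isOpenCover {K : Set X} (hK : IsClosed K)
    (h : ∀ 𝒰 : Set (Set X), IsOpenCover 𝒰 → ∃ 𝒱 ⊆ 𝒰, 𝒱.Finite ∧ K ⊆ ⋃₀ 𝒱) :
    IsCompact K := by
  refine isCompact_generateFrom (generateFrom_setOfPred_isOpen _).symm fun 𝒲 h𝒲 hK𝒲 => ?_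
  have hcover : IsOpenCover (insert Kᶜ 𝒲) := by
    refine ⟨forall_mem_insert.2 ⟨hK.isOpen_compl, h𝒲⟩, eq_univ_of_forall fun x => ?_⟩
    by_cases hx : x ∈ K
    · obtain ⟨U, hU, hxU⟩ := hK𝒲 hx
      exact ⟨U, mem_insert_of_mem _ hU, hxU⟩
    · exact ⟨Kᶜ, mem_insert _ _, hx⟩
  obtain ⟨𝒱, h𝒱, hfin, hK𝒱⟩ := h _ hcover
  refine ⟨𝒱 \ {Kᶜ}, fun V hV => ?_, hfin.sdiff, fun x hx => ?_⟩
  · exact (mem_insert_iff.1 (h𝒱 hV.1)).resolve_left hV.2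
  · obtain ⟨V, hV, hxV⟩ := hK𝒱 hx
    exact ⟨V, ⟨hV, by rintro rfl; exact hxV hx⟩, hxV⟩

lemma IsOpenCover.setOf_closure_subset [RegularSpace X] {𝒰 : Set (Set X)} (h𝒰 : IsOpenCover 𝒰) :
    IsOpenCover {V : Set X | IsOpen V ∧ ∃ U ∈ 𝒰, closure V ⊆ U} := by
  refine ⟨fun V hV => hV.1, eq_univ_of_forall fun x => ?_⟩
  obtain ⟨U, hU, hxU⟩ := h𝒰.2.symm ▸ mem_univ x
  obtain ⟨V, ⟨hxV, hV⟩, hVU⟩ := (hasBasis_opens_closure x).mem_iff.1 ((h𝒰.1 U hU).mem_nhds hxU)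
  exact ⟨V, ⟨hV, U, hU, hVU⟩, hxV⟩

abbrev OpenCover (X : Type*) [TopologicalSpace X] := {𝒰 : Set (Set X) // IsOpenCover 𝒰}

instance : Inhabited (OpenCover X) := ⟨⟨{univ}, ⟨by simp, by simp⟩⟩⟩

def coverKernel (s : OpenCover X → Set (Set X)) : Set X :=
  ⋂ 𝒰, closure (⋃₀ s 𝒰)

lemma isClosed_coverKernel (s : OpenCover X → Set (Set X)) : IsClosed (coverKernel s) :=
  isClosed_iInter fun _ => isClosed_closure

lemma isCompact_coverKernel [RegularSpace X] {s : OpenCover X → Set (Set X)}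
    (hs : ∀ 𝒰, (s 𝒰).Finite ∧ s 𝒰 ⊆ 𝒰.1) : IsCompact (coverKernel s) := by
  refine isCompact_of_isClosed_of_forall_isOpenCover (isClosed_coverKernel s) fun 𝒰 h𝒰 => ?_
  set 𝒰' : OpenCover X := ⟨_, h𝒰.setOf_closure_subset⟩
  obtain ⟨hfin, hsub⟩ := hs 𝒰'
  choose! c hc𝒰 hcV using fun V (hV : V ∈ s 𝒰') => (hsub hV).2
  refine ⟨c '' s 𝒰', image_subset_iff.2 hc𝒰, hfin.image c, fun x hx => ?_⟩
  have hx' : x ∈ closure (⋃₀ s 𝒰') := mem_iInter.1 hx 𝒰'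
  rw [hfin.closure_sUnion] at hx'
  obtain ⟨V, hV, hxV⟩ := mem_iUnion₂.1 hx'
  exact ⟨c V, mem_image_of_mem c hV, hcV V hV hxV⟩

lemma exists_seq_coverKernel_eq [HereditarilyLindelofSpace X] (s : OpenCover X → Set (Set X)) :
    ∃ 𝒰 : ℕ → OpenCover X, ⋂ m, closure (⋃₀ s (𝒰 m)) = coverKernel s :=
  eq_closed_inter_nat (fun 𝒰 => closure (⋃₀ s 𝒰)) fun _ => isClosed_closure

end Kernel

def branch (pick : List ℕ → ℕ) : ℕ → List ℕ
  | 0 => []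
  | n + 1 => pick (branch pick n) :: branch pick n

lemma length_branch (pick : List ℕ → ℕ) (n : ℕ) : (branch pick n).length = n := by
  induction n with
  | zero => rfl
  | succ n ih => simp [branch, ih]

/-- A winning strategy of TWO in `G_fin^ω(𝒪,𝒪)`, with innings indexed by `ℕ`: `move P n` is TWO's
answer in inning `n` to ONE's moves `P 0, …, P n`. -/
structure GfinWinningStrategy (X : Type*) [TopologicalSpace X] where
  move : (ℕ → OpenCover X) → ℕ → Set (Set X)
  move_congr {P P' : ℕ → OpenCover X} {n : ℕ} : (∀ m ≤ n, P m = P' m) → move P n = move P' n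
  legal (P : ℕ → OpenCover X) (n : ℕ) : (move P n).Finite ∧ move P n ⊆ (P n).1
  wins (P : ℕ → OpenCover X) (x : X) : ∃ n, x ∈ ⋃₀ move P n

theorem TwoWinsGfin.nonempty_gfinWinningStrategy {X : Type*} [TopologicalSpace X]
    (h : TwoWinsGfin X Ordinal.omega0) : Nonempty (GfinWinningStrategy X) := by
  obtain ⟨σ, hσ, hwin⟩ := h
  let toNat : Ordinal.{0} → ℕ := invFun Nat.cast
  have toNat_natCast : ∀ n : ℕ, toNat n = n := leftInverse_invFun Nat.cast_injective
  -- beyond `ω` the extended play repeats some move of `P`, which only keeps it legal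
  let extend (P : ℕ → OpenCover X) (γ : Ordinal.{0}) : Set (Set X) := (P (toNat γ)).1
  have extend_natCast (P : ℕ → OpenCover X) (n : ℕ) : extend P n = P n := by
    simp only [extend, toNat_natCast]
  have hcov (P : ℕ → OpenCover X) : ∀ γ < Ordinal.omega0, IsOpenCover (extend P γ) :=
    fun γ _ => (P (toNat γ)).2
  refine ⟨⟨fun P n => σ (extend P) n, fun {P P' n} hPP' => hσ _ _ _ fun β hβ => ?_,
    fun P n => ?_, fun P x => ?_⟩⟩
  · obtain ⟨m, rfl⟩ := Ordinal.lt_omega0.1 (hβ.trans_lt (Ordinal.natCast_lt_omega0 n))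
    simp only [extend_natCast, hPP' m (Nat.cast_le.1 hβ)]
  · simpa only [extend_natCast] using (hwin _ (hcov P)).1 n (Ordinal.natCast_lt_omega0 n)
  · obtain ⟨γ, hγ, hx⟩ := (hwin _ (hcov P)).2 x
    obtain ⟨n, rfl⟩ := Ordinal.lt_omega0.1 hγ
    exact ⟨n, hx⟩

namespace GfinWinningStrategy

variable {X : Type*} [TopologicalSpace X] (S : GfinWinningStrategy X)

/-- TWO's answer in inning `n` when ONE has played `P 0, …, P (n - 1)` and now plays `𝒰`. -/
def response (P : ℕ → OpenCover X) (n : ℕ) (𝒰 : OpenCover X) : Set (Set X) :=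
  S.move (update P n 𝒰) n

lemma isCompact_coverKernel_response [RegularSpace X] (P : ℕ → OpenCover X) (n : ℕ) :
    IsCompact (coverKernel (S.response P n)) :=
  isCompact_coverKernel fun 𝒰 => by simpa [response] using S.legal (update P n 𝒰) n

variable [HereditarilyLindelofSpace X]

noncomputable def kernelCovers (P : ℕ → OpenCover X) (n : ℕ) : ℕ → OpenCover X :=
  (exists_seq_coverKernel_eq (S.response P n)).choose

lemma iInter_kernelCovers (P : ℕ → OpenCover X) (n : ℕ) :
    ⋂ m, closure (⋃₀ S.response P n (S.kernelCovers P n m)) = coverKernel (S.response P n) :=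
  (exists_seq_coverKernel_eq (S.response P n)).choose_spec

/-- The position reached by following the indices `l = [kₙ₋₁, …, k₀]` (newest first) in the tree of
kernel covers; its entries from inning `l.length` on are placeholders. -/
noncomputable def position : List ℕ → ℕ → OpenCover X
  | [] => fun _ => default
  | k :: l => update (position l) l.length (S.kernelCovers (position l) l.length k)

lemma position_cons_of_lt {l : List ℕ} {m : ℕ} (k : ℕ) (hm : m < l.length) :
    S.position (k :: l) m = S.position l m :=
  update_of_ne hm.ne _ _

lemma position_branch_of_lt (pick : List ℕ → ℕ) {m n : ℕ} (hmn : m < n) :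
    S.position (branch pick n) m = S.position (branch pick (m + 1)) m := by
  induction n, hmn using Nat.le_induction with
  | base => rfl
  | succ n hmn ih =>
    rw [branch, S.position_cons_of_lt _ (by rwa [length_branch]), ih]

theorem exists_mem_coverKernel_position (x : X) :
    ∃ l : List ℕ, x ∈ coverKernel (S.response (S.position l) l.length) := by
  by_contra! hx
  have hpick (l : List ℕ) : ∃ k, x ∉ closure (⋃₀ S.move (S.position (k :: l)) l.length) := by
    have hxl := hx l
    rw [← S.iInter_kernelCovers, mem_iInter, not_forall] at hxl
    exact hxl
  choose pick hpick using hpick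
  obtain ⟨n, hn⟩ := S.wins (fun n => S.position (branch pick (n + 1)) n) x
  have hmove : S.move (fun n => S.position (branch pick (n + 1)) n) n =
      S.move (S.position (branch pick (n + 1))) n :=
    S.move_congr fun m hm => (S.position_branch_of_lt pick (Nat.lt_succ_of_le hm)).symm
  have hmiss := hpick (branch pick n)
  rw [length_branch] at hmiss
  exact hmiss (subset_closure (hmove ▸ hn))

end GfinWinningStrategy

theorem GfinWinningStrategy.sigmaCompactSpace {X : Type*} [TopologicalSpace X] [RegularSpace X]
    [HereditarilyLindelofSpace X] (S : GfinWinningStrategy X) : SigmaCompactSpace X := by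
  refine .of_countable (range fun l : List ℕ => coverKernel (S.response (S.position l) l.length))
    (countable_range _) (forall_mem_range.2 fun l => S.isCompact_coverKernel_response _ _) ?_
  refine eq_univ_of_forall fun x => ?_
  obtain ⟨l, hl⟩ := S.exists_mem_coverKernel_position x
  exact ⟨_, mem_range_self l, hl⟩

/-- Telgársky: if TWO has a winning strategy in `G_fin^ω(𝒪,𝒪)` on `X`,
then `X` is σ-compact. -/
theorem sigmaCompact_of_twoWinsGfin_omega
    {X : Type*} [MetricSpace X] [SeparableSpace X]
    (h : TwoWinsGfin X Ordinal.omega0) :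
    ∃ K : ℕ → Set X, (∀ n, IsCompact (K n)) ∧ (⋃ n, K n) = univ := by
  obtain ⟨S⟩ := h.nonempty_gfinWinningStrategy
  have := S.sigmaCompactSpace
  exact ⟨compactCovering X, isCompact_compactCovering X, iUnion_compactCovering X⟩
end

section
/- If X has the Hurewicz property and the selective screenability property S_c(𝒪,𝒪), then for each sequence (𝒰_n : n < ∞) of ω-covers of X there is a sequence (𝒱_n : n < ∞) such that: each 𝒱_n is a finite pairwise disjoint collection of open sets refining 𝒰_n; the families 𝒱_n are mutually disjoint (𝒱_m ∩ 𝒱_n = ∅ for m ≠ n); and there exist integers n_1 < n_2 < ⋯ such that every x ∈ X belongs to ⋃(⋃_{n_k ≤ j < n_{k+1}} 𝒱_j) for all but finitely many k. -/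
open Set Filter Topology TopologicalSpace

/-!
For each `k`, screen the tail `(𝒰 (k + m))ₘ` by `S_c(𝒪,𝒪)` and use the Hurewicz property to pick
finitely many members of the `k`-th screening, so that every point is covered for almost all `k`;
the chosen sets fall into finitely many levels, each pairwise disjoint. Block `r` of consecutive
indices starts at `f r` and lists the levels of the `f r`-th selection. To make all families
mutually disjoint, each infinite member is shrunk by a point never removed before into a set never
used before, and the finite members of a block are absorbed into one unused member of an ω-cover
in an extra last slot. A point is removed at most once, so it is covered by almost every block.
-/

open scoped Function

section Refinements

variable {X : Type*} [TopologicalSpace X]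

def IsFiniteDisjointOpenRefinement (𝒱 𝒰 : Set (Set X)) : Prop :=
  𝒱.Finite ∧ 𝒱.PairwiseDisjoint id ∧ (∀ V ∈ 𝒱, IsOpen V) ∧ ∀ V ∈ 𝒱, ∃ U ∈ 𝒰, V ⊆ U

namespace IsFiniteDisjointOpenRefinement

variable {𝒱 𝒰 : Set (Set X)}

theorem mono (h : IsFiniteDisjointOpenRefinement 𝒱 𝒰) {𝒲 : Set (Set X)} (h𝒲 : 𝒲 ⊆ 𝒱) :
    IsFiniteDisjointOpenRefinement 𝒲 𝒰 :=
  ⟨h.1.subset h𝒲, h.2.1.subset h𝒲, fun V hV => h.2.2.1 V (h𝒲 hV),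
    fun V hV => h.2.2.2 V (h𝒲 hV)⟩

theorem image_of_subset (h : IsFiniteDisjointOpenRefinement 𝒱 𝒰) {g : Set X → Set X}
    (hg : ∀ V ∈ 𝒱, g V ⊆ V) (hgo : ∀ V ∈ 𝒱, IsOpen (g V)) :
    IsFiniteDisjointOpenRefinement (g '' 𝒱) 𝒰 := by
  refine ⟨h.1.image g, ?_, ?_, ?_⟩
  · rintro _ ⟨V, hV, rfl⟩ _ ⟨V', hV', rfl⟩ hne
    exact (h.2.1 hV hV' fun h => hne (h ▸ rfl)).mono (hg V hV) (hg V' hV')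
  · rintro _ ⟨V, hV, rfl⟩
    exact hgo V hV
  · rintro _ ⟨V, hV, rfl⟩
    obtain ⟨U, hU, hVU⟩ := h.2.2.2 V hV
    exact ⟨U, hU, (hg V hV).trans hVU⟩

theorem singleton {U : Set X} (hU : U ∈ 𝒰) (hUo : IsOpen U) :
    IsFiniteDisjointOpenRefinement {U} 𝒰 :=
  ⟨finite_singleton U, pairwiseDisjoint_singleton _ _, by simpa using hUo,
    by simpa using ⟨U, hU, subset_rfl⟩⟩

end IsFiniteDisjointOpenRefinement

theorem IsOmegaCover.exists_superset_notMem {𝒰 : Set (Set X)} (h : IsOmegaCover 𝒰)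
    {A : Set X} (hA : A.Finite) {P : Set (Set X)} (hP : P.Finite) :
    ∃ U ∈ 𝒰, A ⊆ U ∧ U ∉ P := by
  have hout : ∀ V ∈ P ∩ 𝒰, ∃ z, z ∉ V := fun V hV => by
    by_contra! hV'
    exact h.2.1 (eq_univ_of_forall hV' ▸ hV.2)
  choose z hz using hout
  obtain ⟨U, hU, hAU⟩ := h.2.2 (A ∪ ⋃ V ∈ P ∩ 𝒰, {z V ‹_›})
    (hA.union ((hP.inter_of_left 𝒰).biUnion' fun _ _ => finite_singleton _))
  refine ⟨U, hU, subset_union_left.trans hAU, fun hUP => hz U ⟨hUP, hU⟩ (hAU ?_)⟩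
  exact Or.inr (mem_iUnion₂.2 ⟨U, ⟨hUP, hU⟩, rfl⟩)

theorem Set.Infinite.exists_diff_singleton_notMem {α : Type*} {W : Set α} (hW : W.Infinite)
    {P : Set (Set α)} (hP : P.Finite) {Q : Set α} (hQ : Q.Finite) :
    ∃ p ∈ W \ Q, W \ {p} ∉ P := by
  have hinj : InjOn (fun p => W \ {p}) W := fun p _ q hq hpq => by
    by_contra hne
    have hq' : q ∈ W \ {p} := ⟨hq, Ne.symm hne⟩
    simp only [hpq] at hq'
    exact hq'.2 rfl
  have hbad : {p ∈ W | W \ {p} ∈ P}.Finite :=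
    Finite.of_finite_image (hP.subset (image_subset_iff.2 fun _ hp => hp.2))
      (hinj.mono (sep_subset _ _))
  obtain ⟨p, hpW, hp⟩ := ((hW.sdiff hQ).sdiff hbad).nonempty
  exact ⟨p, hpW, fun hpP => hp ⟨hpW.1, hpP⟩⟩

/-- Each infinite member loses one point, chosen outside `Q` so that the shrunken set lies outside
`P`; the removed points form `D`. -/
theorem IsFiniteDisjointOpenRefinement.exists_shrink_fresh [T1Space X] {ℱ 𝒰 : Set (Set X)}
    (h : IsFiniteDisjointOpenRefinement ℱ 𝒰) {P : Set (Set X)} (hP : P.Finite)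
    {Q : Set X} (hQ : Q.Finite) :
    ∃ 𝒱 D, IsFiniteDisjointOpenRefinement 𝒱 𝒰 ∧ D.Finite ∧ Disjoint 𝒱 P ∧ Disjoint D Q ∧
      ⋃₀ {W ∈ ℱ | W.Infinite} ⊆ ⋃₀ 𝒱 ∪ D := by
  rcases isEmpty_or_nonempty X with hX | hX
  · exact ⟨∅, ∅, h.mono (empty_subset _), finite_empty, empty_disjoint _, empty_disjoint _,
      fun x => isEmptyElim x⟩
  set ℱ' := {W ∈ ℱ | W.Infinite}
  have hℱ' : ℱ'.Finite := h.1.subset (sep_subset _ _)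
  choose! p hp hpP using fun W (hW : W ∈ ℱ') => hW.2.exists_diff_singleton_notMem hP hQ
  refine ⟨(fun W => W \ {p W}) '' ℱ', p '' ℱ', ?_, hℱ'.image p, ?_, ?_, ?_⟩
  · exact (h.mono (sep_subset _ _)).image_of_subset (fun _ _ => sdiff_subset)
      fun W hW => (h.2.2.1 W hW.1).sdiff isClosed_singleton
  · rw [disjoint_left]
    rintro _ ⟨W, hW, rfl⟩
    exact hpP W hW
  · rw [disjoint_left]
    rintro _ ⟨W, hW, rfl⟩
    exact (hp W hW).2
  · rintro x ⟨W, hW, hxW⟩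
    by_cases hx : x = p W
    · exact Or.inr ⟨W, hW, hx.symm⟩
    · exact Or.inl ⟨_, ⟨W, hW, rfl⟩, hxW, hx⟩

/-- The `k`-th Hurewicz selection is taken from the screenings of the tail `(𝒰 (k + m))ₘ`;
`𝒜 k t` collects its members that come from the `t`-th screening. -/
theorem exists_levelled_refinements (hH : Hurewicz X) (hSc : SelScreenable X)
    {𝒰 : ℕ → Set (Set X)} (h𝒰 : ∀ n, IsOpenCover (𝒰 n)) :
    ∃ (M : ℕ → ℕ) (𝒜 : ℕ → ℕ → Set (Set X)),
      (∀ k t, IsFiniteDisjointOpenRefinement (𝒜 k t) (𝒰 (k + t))) ∧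
        ∀ x, ∀ᶠ k in atTop, ∃ t ≤ M k, x ∈ ⋃₀ 𝒜 k t := by
  choose 𝒲 h𝒲 h𝒲cov using fun k => hSc (fun m => 𝒰 (k + m)) fun m => h𝒰 (k + m)
  obtain ⟨𝒢, h𝒢, h𝒢cov⟩ := hH (fun k => ⋃ m, 𝒲 k m) fun k =>
    ⟨fun V hV => (h𝒲 k _).2.1 V (mem_iUnion.1 hV).choose_spec, h𝒲cov k⟩
  have hbound : ∀ k, ∃ M, ∀ W ∈ 𝒢 k, ∃ m ≤ M, W ∈ 𝒲 k m := fun k => by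
    obtain ⟨I, hI, h𝒢I⟩ := finite_subset_iUnion (h𝒢 k).1 (h𝒢 k).2
    obtain ⟨M, hM⟩ := hI.bddAbove
    exact ⟨M, fun W hW => by
      obtain ⟨m, hm, hWm⟩ := mem_iUnion₂.1 (h𝒢I hW)
      exact ⟨m, hM hm, hWm⟩⟩
  choose M hM using hbound
  refine ⟨M, fun k t => 𝒢 k ∩ 𝒲 k t, fun k t => ?_, fun x => (h𝒢cov x).mono ?_⟩
  · exact ⟨(h𝒢 k).1.subset inter_subset_left, (h𝒲 k t).1.subset inter_subset_right,
      fun V hV => (h𝒲 k t).2.1 V hV.2, fun V hV => (h𝒲 k t).2.2 V hV.2⟩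
  · rintro k ⟨W, hW, hxW⟩
    obtain ⟨m, hm, hWm⟩ := hM k W hW
    exact ⟨m, hm, W, ⟨hW, hWm⟩, hxW⟩

end Refinements

theorem exists_seq_pairwise_disjoint {α β : Type*} (Good : ℕ → Set α → Set β → Prop)
    (h : ∀ n (P : Set α) (Q : Set β), P.Finite → Q.Finite →
      ∃ A B, A.Finite ∧ B.Finite ∧ Disjoint A P ∧ Disjoint B Q ∧ Good n A B) :
    ∃ (A : ℕ → Set α) (B : ℕ → Set β),
      (∀ n, Good n (A n) (B n)) ∧ Pairwise (Disjoint on A) ∧ Pairwise (Disjoint on B) := by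
  choose! A B hA hB hAP hBQ hGood using h
  let used : ℕ → Set α × Set β := fun n =>
    Nat.rec (∅, ∅) (fun n S => (S.1 ∪ A n S.1 S.2, S.2 ∪ B n S.1 S.2)) n
  have hfin : ∀ n, (used n).1.Finite ∧ (used n).2.Finite := by
    intro n
    induction n with
    | zero => exact ⟨finite_empty, finite_empty⟩
    | succ n ih => exact ⟨ih.1.union (hA n _ _ ih.1 ih.2), ih.2.union (hB n _ _ ih.1 ih.2)⟩
  have hmono : Monotone used :=
    monotone_nat_of_le_succ fun n => ⟨subset_union_left, subset_union_left⟩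
  refine ⟨fun n => A n (used n).1 (used n).2, fun n => B n (used n).1 (used n).2,
    fun n => hGood n _ _ (hfin n).1 (hfin n).2, ?_, ?_⟩
  · refine (pairwise_disjoint_on _).2 fun m n hmn => ?_
    exact (hAP n _ _ (hfin n).1 (hfin n).2).symm.mono_left
      (subset_union_right.trans (hmono (Nat.succ_le_of_lt hmn)).1)
  · refine (pairwise_disjoint_on _).2 fun m n hmn => ?_
    exact (hBQ n _ _ (hfin n).1 (hfin n).2).symm.mono_left
      (subset_union_right.trans (hmono (Nat.succ_le_of_lt hmn)).2)

theorem eventually_notMem_of_pairwise_disjoint {α : Type*} {D : ℕ → Set α}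
    (hD : Pairwise (Disjoint on D)) (x : α) : ∀ᶠ n in atTop, x ∉ D n := by
  have hsub : {n | x ∈ D n}.Subsingleton := fun m hm n hn => by
    by_contra hne
    exact disjoint_left.1 (hD hne) hm hn
  simpa only [Nat.cofinite_eq_atTop, mem_ofPred_eq] using hsub.finite.eventually_cofinite_notMem

theorem StrictMono.exists_mem_Ico {f : ℕ → ℕ} (hf : StrictMono f) (h0 : f 0 = 0) (j : ℕ) :
    ∃ r, j ∈ Ico (f r) (f (r + 1)) := by
  have hU := iUnion_Ico_map_succ_eq_Ici (f := f) (fun a => by simp [h0])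
    hf.not_bddAbove_range_of_wellFoundedLT
  have hj : j ∈ Ici (f ⊥) := by simp [h0]
  rw [← hU] at hj
  simpa using hj

theorem StrictMono.eq_of_mem_Ico {f : ℕ → ℕ} (hf : StrictMono f) {j r r' : ℕ}
    (h : j ∈ Ico (f r) (f (r + 1))) (h' : j ∈ Ico (f r') (f (r' + 1))) : r = r' := by
  by_contra hne
  exact disjoint_left.1 (hf.monotone.pairwise_disjoint_on_Ico_succ hne) (by simpa using h)
    (by simpa using h')

/-- A block built from levels `𝒜 0, …, 𝒜 m` has `m + 2` slots: slot `t ≤ m` covers the infinite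
members of `𝒜 t` up to the exceptional points `D`, and slot `m + 1` covers all finite members. -/
def CoversSlot {X : Type*} (𝒜 : ℕ → Set (Set X)) (m t : ℕ) (𝒱 : Set (Set X)) (D : Set X) :
    Prop :=
  (t ≤ m → ⋃₀ {W ∈ 𝒜 t | W.Infinite} ⊆ ⋃₀ 𝒱 ∪ D) ∧
    (t = m + 1 → ⋃ s ≤ m, ⋃₀ {W ∈ 𝒜 s | W.Finite} ⊆ ⋃₀ 𝒱)

theorem exists_mem_of_coversSlot {X : Type*} {𝒜 : ℕ → Set (Set X)} {m : ℕ}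
    {𝒱 : ℕ → Set (Set X)} {D : ℕ → Set X} (h : ∀ t ≤ m + 1, CoversSlot 𝒜 m t (𝒱 t) (D t))
    {x : X} (hx : ∃ t ≤ m, x ∈ ⋃₀ 𝒜 t) (hxD : ∀ t, x ∉ D t) : ∃ t ≤ m + 1, x ∈ ⋃₀ 𝒱 t := by
  obtain ⟨t, ht, W, hW, hxW⟩ := hx
  by_cases hWinf : W.Infinite
  · exact ⟨t, by omega, ((h t (by omega)).1 ht ⟨W, ⟨hW, hWinf⟩, hxW⟩).resolve_right (hxD t)⟩
  · exact ⟨m + 1, le_rfl,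
      (h (m + 1) le_rfl).2 rfl (mem_iUnion₂.2 ⟨t, ht, W, ⟨hW, not_infinite.1 hWinf⟩, hxW⟩)⟩

section Blocks

variable {X : Type*} [TopologicalSpace X] [T1Space X] {𝒰 : ℕ → Set (Set X)}

/-- The last slot is filled by one member of an ω-cover containing all finite members; it can be
chosen outside `P` because an ω-cover has infinitely many members containing a given finite set. -/
theorem exists_fresh_coversSlot {𝒜 : ℕ → Set (Set X)} {k : ℕ}
    (h𝒜 : ∀ s, IsFiniteDisjointOpenRefinement (𝒜 s) (𝒰 (k + s))) (m t : ℕ)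
    (h𝒰 : IsOmegaCover (𝒰 (k + t))) {P : Set (Set X)} (hP : P.Finite) {Q : Set X}
    (hQ : Q.Finite) :
    ∃ 𝒱 D, IsFiniteDisjointOpenRefinement 𝒱 (𝒰 (k + t)) ∧ D.Finite ∧ Disjoint 𝒱 P ∧
      Disjoint D Q ∧ CoversSlot 𝒜 m t 𝒱 D := by
  by_cases ht : t ≤ m
  · obtain ⟨𝒱, D, h𝒱, hD, h𝒱P, hDQ, hcov⟩ := (h𝒜 t).exists_shrink_fresh hP hQ
    exact ⟨𝒱, D, h𝒱, hD, h𝒱P, hDQ, fun _ => hcov, fun _ => by omega⟩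
  · have hfin : (⋃ s ≤ m, ⋃₀ {W ∈ 𝒜 s | W.Finite}).Finite :=
      (finite_le_nat m).biUnion fun s _ =>
        ((h𝒜 s).1.subset (sep_subset _ _)).sUnion fun W hW => hW.2
    obtain ⟨U, hU, hAU, hUP⟩ := h𝒰.exists_superset_notMem hfin hP
    exact ⟨{U}, ∅, .singleton hU (h𝒰.1.1 U hU), finite_empty, disjoint_singleton_left.2 hUP,
      empty_disjoint Q, fun h => absurd h ht,
      fun _ => hAU.trans (subset_sUnion_of_mem rfl)⟩

/-- Block `r` occupies the indices `[f r, f (r + 1))`, its slots filled as in `CoversSlot` for the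
levels `𝒜 (f r)`. -/
theorem exists_grouped_refinements_of_levelled (h𝒰 : ∀ n, IsOmegaCover (𝒰 n))
    {M : ℕ → ℕ} {𝒜 : ℕ → ℕ → Set (Set X)}
    (h𝒜 : ∀ k t, IsFiniteDisjointOpenRefinement (𝒜 k t) (𝒰 (k + t)))
    (hcov : ∀ x, ∀ᶠ k in atTop, ∃ t ≤ M k, x ∈ ⋃₀ 𝒜 k t) :
    ∃ 𝒱 : ℕ → Set (Set X), (∀ n, IsFiniteDisjointOpenRefinement (𝒱 n) (𝒰 n)) ∧
      Pairwise (Disjoint on 𝒱) ∧ ∃ f : ℕ → ℕ, StrictMono f ∧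
        ∀ x, ∀ᶠ k in atTop, x ∈ ⋃ j ∈ Ico (f k) (f (k + 1)), ⋃₀ 𝒱 j := by
  obtain ⟨f, hf0, hfs⟩ : ∃ f : ℕ → ℕ, f 0 = 0 ∧ ∀ r, f (r + 1) = f r + (M (f r) + 2) :=
    ⟨fun r => Nat.rec 0 (fun _ a => a + (M a + 2)) r, rfl, fun _ => rfl⟩
  have hf : StrictMono f := strictMono_nat_of_lt_succ fun r => by rw [hfs]; omega
  obtain ⟨𝒱, D, hgood, h𝒱disj, hDdisj⟩ := exists_seq_pairwise_disjoint
    (fun j 𝒱 D => IsFiniteDisjointOpenRefinement 𝒱 (𝒰 j) ∧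
      ∀ r, j ∈ Ico (f r) (f (r + 1)) → CoversSlot (𝒜 (f r)) (M (f r)) (j - f r) 𝒱 D)
    fun j P Q hP hQ => by
      obtain ⟨r, hr⟩ := hf.exists_mem_Ico hf0 j
      obtain ⟨t, rfl⟩ : ∃ t, j = f r + t := ⟨j - f r, (Nat.add_sub_of_le hr.1).symm⟩
      obtain ⟨𝒱, D, h𝒱, hD, h𝒱P, hDQ, hslot⟩ :=
        exists_fresh_coversSlot (h𝒜 (f r)) (M (f r)) t (h𝒰 _) hP hQ
      refine ⟨𝒱, D, h𝒱.1, hD, h𝒱P, hDQ, h𝒱, fun r' hr' => ?_⟩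
      obtain rfl := hf.eq_of_mem_Ico hr hr'
      simpa using hslot
  refine ⟨𝒱, fun n => (hgood n).1, h𝒱disj, f, hf, fun x => ?_⟩
  filter_upwards [hf.tendsto_atTop.eventually (hcov x), hf.tendsto_atTop.eventually
    (eventually_forall_ge_atTop.2 (eventually_notMem_of_pairwise_disjoint hDdisj x))]
    with r hxr hxD
  have hblock : ∀ t ≤ M (f r) + 1, f r + t ∈ Ico (f r) (f (r + 1)) := fun t ht =>
    ⟨le_add_right le_rfl, by rw [hfs]; omega⟩
  obtain ⟨t, ht, hxt⟩ := exists_mem_of_coversSlot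
    (fun t ht => by simpa using (hgood (f r + t)).2 r (hblock t ht)) hxr
    (fun t => hxD _ le_self_add)
  exact mem_biUnion (hblock t ht) hxt

end Blocks

theorem sc_and_hurewicz_implies_grouped_refinements_general
    {X : Type*} [MetricSpace X]
    (hH : Hurewicz X) (hSc : SelScreenable X)
    (𝒰 : ℕ → Set (Set X)) (h𝒰 : ∀ n, IsOmegaCover (𝒰 n)) :
    ∃ 𝒱 : ℕ → Set (Set X),
      (∀ n, (𝒱 n).Finite ∧ (𝒱 n).PairwiseDisjoint id ∧ (∀ V ∈ 𝒱 n, IsOpen V) ∧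
        (∀ V ∈ 𝒱 n, ∃ U ∈ 𝒰 n, V ⊆ U)) ∧
      (∀ m n, m ≠ n → Disjoint (𝒱 m) (𝒱 n)) ∧
      (∃ f : ℕ → ℕ, StrictMono f ∧
        ∀ x : X, ∀ᶠ k in atTop, x ∈ ⋃ j ∈ Set.Ico (f k) (f (k + 1)), ⋃₀ 𝒱 j) := by
  obtain ⟨M, 𝒜, h𝒜, hcov⟩ := exists_levelled_refinements hH hSc fun n => (h𝒰 n).1
  obtain ⟨𝒱, h𝒱, hdisj, hgroup⟩ := exists_grouped_refinements_of_levelled h𝒰 h𝒜 hcov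
  exact ⟨𝒱, h𝒱, fun _ _ hmn => hdisj hmn, hgroup⟩

/-- If `X` has the Hurewicz property and `S_c(𝒪,𝒪)`, then every sequence of
ω-covers admits finite pairwise disjoint open refinements, mutually disjoint,
which can be grouped so that every point is in all but finitely many groups. -/
theorem sc_and_hurewicz_implies_grouped_refinements
    {X : Type*} [MetricSpace X] [SeparableSpace X]
    (hH : Hurewicz X) (hSc : SelScreenable X)
    (𝒰 : ℕ → Set (Set X)) (h𝒰 : ∀ n, IsOmegaCover (𝒰 n)) :
    ∃ 𝒱 : ℕ → Set (Set X),
      (∀ n, (𝒱 n).Finite ∧ (𝒱 n).PairwiseDisjoint id ∧ (∀ V ∈ 𝒱 n, IsOpen V) ∧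
        (∀ V ∈ 𝒱 n, ∃ U ∈ 𝒰 n, V ⊆ U)) ∧
      (∀ m n, m ≠ n → Disjoint (𝒱 m) (𝒱 n)) ∧
      (∃ f : ℕ → ℕ, StrictMono f ∧
        ∀ x : X, ∀ᶠ k in atTop, x ∈ ⋃ j ∈ Set.Ico (f k) (f (k + 1)), ⋃₀ 𝒱 j) :=
  sc_and_hurewicz_implies_grouped_refinements_general hH hSc 𝒰 h𝒰
end

section
/- Conversely, if a separable metric space X satisfies: for each sequence (𝒰_n) of ω-covers there is a sequence (𝒱_n) of finite pairwise disjoint open families refining 𝒰_n, pairwise disjoint as families, with integers n_1 < n_2 < ⋯ such that every x ∈ X belongs to all but finitely many of the sets ⋃(⋃_{n_k ≤ j < n_{k+1}} 𝒱_j) — then X has both S_c(𝒪,𝒪) and the Hurewicz property. -/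
open Set Filter Topology TopologicalSpace

section GroupedRefinementHelpers

variable {X : Type*} [MetricSpace X]

/-- Build an ω-cover from openness, properness and the finite-engulfing property. -/
lemma isOmegaCover_mk {S : Set (Set X)} (h1 : ∀ W ∈ S, IsOpen W) (h2 : univ ∉ S)
    (h3 : ∀ F : Set X, F.Finite → ∃ W ∈ S, F ⊆ W) : IsOmegaCover S := by
  refine ⟨⟨h1, ?_⟩, h2, h3⟩
  apply eq_univ_of_forall
  intro x
  obtain ⟨W, hWS, hxW⟩ := h3 {x} (finite_singleton x)
  exact ⟨W, hWS, hxW rfl⟩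

/-- In an infinite T1 space one may shrink an open set containing a finite set
to a proper open set still containing it. -/
lemma exists_proper_open_shave [Infinite X] {F W₀ : Set X} (hF : F.Finite)
    (hW₀ : IsOpen W₀) (hFW : F ⊆ W₀) :
    ∃ W : Set X, IsOpen W ∧ W ≠ univ ∧ W ⊆ W₀ ∧ F ⊆ W := by
  by_cases hU : W₀ = univ
  · obtain ⟨y, hy⟩ := hF.infinite_compl.nonempty
    refine ⟨{y}ᶜ, isOpen_compl_singleton, ?_, by rw [hU]; exact subset_univ _, ?_⟩
    · intro he
      have : y ∈ ({y}ᶜ : Set X) := he ▸ mem_univ y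
      exact this rfl
    · intro x hx
      intro hxy
      apply hy
      simp only [mem_singleton_iff] at hxy
      subst hxy
      exact hx
  · exact ⟨W₀, hW₀, hU, subset_rfl, hFW⟩

/-- The grouped disjoint refinement property for ω-covers implies the Hurewicz
property (for infinite spaces). -/
lemma hurewicz_of_grouped_refinements_aux [Infinite X]
    (h : ∀ 𝒰 : ℕ → Set (Set X), (∀ n, IsOmegaCover (𝒰 n)) →
      ∃ 𝒱 : ℕ → Set (Set X),
      (∀ n, (𝒱 n).Finite ∧ (𝒱 n).PairwiseDisjoint id ∧ (∀ V ∈ 𝒱 n, IsOpen V) ∧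
        (∀ V ∈ 𝒱 n, ∃ U ∈ 𝒰 n, V ⊆ U)) ∧
      (∀ m n, m ≠ n → Disjoint (𝒱 m) (𝒱 n)) ∧
      (∃ f : ℕ → ℕ, StrictMono f ∧
        ∀ x : X, ∀ᶠ k in atTop, x ∈ ⋃ j ∈ Set.Ico (f k) (f (k + 1)), ⋃₀ 𝒱 j)) :
    Hurewicz X := by
  intro 𝒰 h𝒰
  have hmem : ∀ (i : ℕ) (x : X), ∃ U, U ∈ 𝒰 i ∧ x ∈ U := by
    intro i x
    have hx : x ∈ ⋃₀ 𝒰 i := by rw [(h𝒰 i).2]; trivial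
    obtain ⟨U, hU, hxU⟩ := hx
    exact ⟨U, hU, hxU⟩
  choose u hu hxu using hmem
  set Ω : ℕ → Set (Set X) := fun j =>
    {W | IsOpen W ∧ W ≠ univ ∧ ∀ i ≤ j,
      ∃ G : Set (Set X), G.Finite ∧ G ⊆ 𝒰 i ∧ W ⊆ ⋃₀ G} with hΩdef
  have hΩω : ∀ j, IsOmegaCover (Ω j) := by
    intro j
    apply isOmegaCover_mk
    · exact fun W hW => hW.1
    · exact fun hW => hW.2.1 rfl
    · intro F hF
      set W₀ : Set X := ⋂ i ∈ Set.Iic j, ⋃ x ∈ F, u i x with hW₀def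
      have hW₀open : IsOpen W₀ :=
        (Set.finite_Iic j).isOpen_biInter fun i _ =>
          isOpen_biUnion fun x _ => (h𝒰 i).1 _ (hu i x)
      have hFW₀ : F ⊆ W₀ := by
        intro x hx
        apply mem_iInter₂.mpr
        intro i _
        exact mem_biUnion hx (hxu i x)
      obtain ⟨W, hWopen, hWne, hWsub, hFW⟩ := exists_proper_open_shave hF hW₀open hFW₀
      refine ⟨W, ⟨hWopen, hWne, ?_⟩, hFW⟩
      intro i hij
      refine ⟨u i '' F, hF.image _, ?_, ?_⟩
      · rintro _ ⟨x, _, rfl⟩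
        exact hu i x
      · rw [sUnion_image]
        exact hWsub.trans (biInter_subset_of_mem (mem_Iic.mpr hij))
  obtain ⟨𝒱, h𝒱, -, f, hfmono, hgroup⟩ := h Ω hΩω
  have key : ∀ n m V, ∃ G : Set (Set X),
      n ≤ m → V ∈ 𝒱 m → (G.Finite ∧ G ⊆ 𝒰 n ∧ V ⊆ ⋃₀ G) := by
    intro n m V
    by_cases hc : n ≤ m ∧ V ∈ 𝒱 m
    · obtain ⟨W, hWΩ, hVW⟩ := (h𝒱 m).2.2.2 V hc.2
      obtain ⟨G, hGfin, hGsub, hWG⟩ := hWΩ.2.2 n hc.1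
      exact ⟨G, fun _ _ => ⟨hGfin, hGsub, hVW.trans hWG⟩⟩
    · exact ⟨∅, fun h1 h2 => absurd ⟨h1, h2⟩ hc⟩
  choose G hG using key
  have hnm : ∀ n m, m ∈ Set.Ico (f n) (f (n + 1)) → n ≤ m :=
    fun n m hm => le_trans hfmono.le_apply hm.1
  refine ⟨fun n => ⋃ m ∈ Set.Ico (f n) (f (n + 1)), ⋃ V ∈ 𝒱 m, G n m V, ?_, ?_⟩
  · intro n
    constructor
    · apply Set.Finite.biUnion (Set.finite_Ico _ _)
      intro m hm
      exact Set.Finite.biUnion (h𝒱 m).1 fun V hV => (hG n m V (hnm n m hm) hV).1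
    · intro S hS
      simp only [mem_iUnion] at hS
      obtain ⟨m, hm, V, hV, hSG⟩ := hS
      exact (hG n m V (hnm n m hm) hV).2.1 hSG
  · intro z
    filter_upwards [hgroup z] with n hn
    simp only [mem_iUnion] at hn
    obtain ⟨m, hm, hz⟩ := hn
    obtain ⟨V, hV, hzV⟩ := hz
    have hzG : z ∈ ⋃₀ G n m V := (hG n m V (hnm n m hm) hV).2.2 hzV
    obtain ⟨S, hS, hzS⟩ := hzG
    refine ⟨S, ?_, hzS⟩
    simp only [mem_iUnion]
    exact ⟨m, hm, V, hV, hS⟩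

/-- The grouped disjoint refinement property, together with the Hurewicz
property, implies selective screenability (for infinite spaces). -/
lemma selScreenable_of_grouped_refinements_aux [Infinite X]
    (h : ∀ 𝒰 : ℕ → Set (Set X), (∀ n, IsOmegaCover (𝒰 n)) →
      ∃ 𝒱 : ℕ → Set (Set X),
      (∀ n, (𝒱 n).Finite ∧ (𝒱 n).PairwiseDisjoint id ∧ (∀ V ∈ 𝒱 n, IsOpen V) ∧
        (∀ V ∈ 𝒱 n, ∃ U ∈ 𝒰 n, V ⊆ U)) ∧
      (∀ m n, m ≠ n → Disjoint (𝒱 m) (𝒱 n)) ∧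
      (∃ f : ℕ → ℕ, StrictMono f ∧
        ∀ x : X, ∀ᶠ k in atTop, x ∈ ⋃ j ∈ Set.Ico (f k) (f (k + 1)), ⋃₀ 𝒱 j))
    (hH : Hurewicz X) : SelScreenable X := by
  intro 𝒰 h𝒰
  have hmem : ∀ (q : ℕ) (x : X), ∃ U, U ∈ 𝒰 q ∧ x ∈ U := by
    intro q x
    have hx : x ∈ ⋃₀ 𝒰 q := by rw [(h𝒰 q).2]; trivial
    obtain ⟨U, hU, hxU⟩ := hx
    exact ⟨U, hU, hxU⟩
  choose u hu hxu using hmem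
  -- the covers by finite intersections of members of `𝒰 0, …, 𝒰 i`
  set 𝒰' : ℕ → Set (Set X) := fun i =>
    {U | ∃ c : ℕ → Set X, (∀ q, c q ∈ 𝒰 q) ∧ U = ⋂ q ∈ Set.Iic i, c q} with h𝒰'def
  have h𝒰'open : ∀ i U, U ∈ 𝒰' i → IsOpen U := by
    rintro i U ⟨c, hc, rfl⟩
    exact (Set.finite_Iic i).isOpen_biInter fun q _ => (h𝒰 q).1 _ (hc q)
  have h𝒰'ref : ∀ i U, U ∈ 𝒰' i → ∀ q ≤ i, ∃ U' ∈ 𝒰 q, U ⊆ U' := by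
    rintro i U ⟨c, hc, rfl⟩ q hq
    exact ⟨c q, hc q, biInter_subset_of_mem (mem_Iic.mpr hq)⟩
  have h𝒰'cov : ∀ i, IsOpenCover (𝒰' i) := by
    intro i
    refine ⟨fun U hU => h𝒰'open i U hU, eq_univ_of_forall fun x => ?_⟩
    refine ⟨⋂ q ∈ Set.Iic i, u q x, ⟨fun q => u q x, fun q => hu q x, rfl⟩, ?_⟩
    exact mem_iInter₂.mpr fun q _ => hxu q x
  obtain ⟨𝒢, h𝒢, hev⟩ := hH 𝒰' h𝒰'cov
  -- the ω-covers used for the second application of the hypothesis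
  set Ξ : ℕ → Set (Set X) := fun n =>
    {W | IsOpen W ∧ W ≠ univ ∧ ∃ (s : ℕ) (I : ℕ → ℕ) (Us : ℕ → Set X),
      (∀ j < s, Nat.pair n j ≤ I j ∧ Us j ∈ 𝒢 (I j)) ∧
      W ⊆ ⋃ j ∈ Set.Iio s, Us j} with hΞdef
  have hΞω : ∀ n, IsOmegaCover (Ξ n) := by
    intro n
    apply isOmegaCover_mk
    · exact fun W hW => hW.1
    · exact fun hW => hW.2.1 rfl
    · intro F hF
      obtain ⟨s, e, -, rfl⟩ := hF.fin_param
      have hj : ∀ j : Fin s, ∃ (Ij : ℕ) (Uj : Set X),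
          Nat.pair n (j : ℕ) ≤ Ij ∧ Uj ∈ 𝒢 Ij ∧ e j ∈ Uj := by
        intro j
        obtain ⟨a, ha⟩ := eventually_atTop.mp (hev (e j))
        have hx : e j ∈ ⋃₀ 𝒢 (max (Nat.pair n (j : ℕ)) a) := ha _ (le_max_right _ _)
        obtain ⟨Uj, hUj, hxU⟩ := hx
        exact ⟨_, Uj, le_max_left _ _, hUj, hxU⟩
      choose I0 U0 hI0 hU0 hx0 using hj
      set I : ℕ → ℕ := fun j => if hjs : j < s then I0 ⟨j, hjs⟩ else 0 with hIdef
      set Us : ℕ → Set X := fun j => if hjs : j < s then U0 ⟨j, hjs⟩ else ∅ with hUsdef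
      set W₀ : Set X := ⋃ j ∈ Set.Iio s, Us j with hW₀def
      have hUsopen : ∀ j, IsOpen (Us j) := by
        intro j
        by_cases hjs : j < s
        · have : Us j = U0 ⟨j, hjs⟩ := by simp [hUsdef, hjs]
          rw [this]
          exact h𝒰'open _ _ ((h𝒢 _).2 (hU0 ⟨j, hjs⟩))
        · have : Us j = ∅ := by simp [hUsdef, hjs]
          rw [this]; exact isOpen_empty
      have hW₀open : IsOpen W₀ := isOpen_biUnion fun j _ => hUsopen j
      have hFW₀ : range e ⊆ W₀ := by
        rintro _ ⟨j, rfl⟩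
        have hjs : (j : ℕ) < s := j.isLt
        refine mem_biUnion hjs ?_
        have : Us (j : ℕ) = U0 ⟨(j : ℕ), hjs⟩ := by simp [hUsdef, hjs]
        rw [this]
        have : (⟨(j : ℕ), hjs⟩ : Fin s) = j := by ext; rfl
        rw [this]
        exact hx0 j
      obtain ⟨W, hWopen, hWne, hWsub, hFW⟩ :=
        exists_proper_open_shave (finite_range e) hW₀open hFW₀
      refine ⟨W, ⟨hWopen, hWne, s, I, Us, ?_, hWsub⟩, hFW⟩
      intro j hjs
      constructor
      · have : I j = I0 ⟨j, hjs⟩ := by simp [hIdef, hjs]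
        rw [this]
        exact hI0 ⟨j, hjs⟩
      · have h1 : Us j = U0 ⟨j, hjs⟩ := by simp [hUsdef, hjs]
        have h2 : I j = I0 ⟨j, hjs⟩ := by simp [hIdef, hjs]
        rw [h1, h2]
        exact hU0 ⟨j, hjs⟩
  obtain ⟨𝒱, h𝒱, -, f, hfmono, hgroup⟩ := h Ξ hΞω
  have key : ∀ n V, ∃ (s : ℕ) (I : ℕ → ℕ) (Us : ℕ → Set X),
      V ∈ 𝒱 n → ((∀ j < s, Nat.pair n j ≤ I j ∧ Us j ∈ 𝒢 (I j)) ∧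
        V ⊆ ⋃ j ∈ Set.Iio s, Us j) := by
    intro n V
    by_cases hVm : V ∈ 𝒱 n
    · obtain ⟨W, hWΞ, hVW⟩ := (h𝒱 n).2.2.2 V hVm
      obtain ⟨-, -, s, I, Us, hjs, hWU⟩ := hWΞ
      exact ⟨s, I, Us, fun _ => ⟨hjs, hVW.trans hWU⟩⟩
    · exact ⟨0, fun _ => 0, fun _ => ∅, fun hc => absurd hc hVm⟩
  choose sV IV UV hkey using key
  refine ⟨fun q => {P | ∃ V, V ∈ 𝒱 q.unpair.1 ∧ q.unpair.2 < sV q.unpair.1 V ∧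
      P = V ∩ UV q.unpair.1 V q.unpair.2}, ?_, ?_⟩
  · intro q
    refine ⟨?_, ?_, ?_⟩
    · rintro P₁ ⟨V₁, hV₁, hj₁, rfl⟩ P₂ ⟨V₂, hV₂, hj₂, rfl⟩ hne
      have hVne : V₁ ≠ V₂ := by
        rintro rfl
        exact hne rfl
      have hd : Disjoint V₁ V₂ := (h𝒱 _).2.1 hV₁ hV₂ hVne
      exact hd.mono inter_subset_left inter_subset_left
    · rintro P ⟨V, hV, hj, rfl⟩
      have h1 : IsOpen V := (h𝒱 _).2.2.1 V hV
      have h2 := ((hkey _ V hV).1 _ hj).2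
      exact h1.inter (h𝒰'open _ _ ((h𝒢 _).2 h2))
    · rintro P ⟨V, hV, hj, rfl⟩
      have h2 := (hkey _ V hV).1 _ hj
      have hU' : UV q.unpair.1 V q.unpair.2 ∈ 𝒰' (IV q.unpair.1 V q.unpair.2) :=
        (h𝒢 _).2 h2.2
      have hq : q ≤ IV q.unpair.1 V q.unpair.2 := by
        have := h2.1
        rwa [Nat.pair_unpair q] at this
      obtain ⟨U', hU'mem, hsub⟩ := h𝒰'ref _ _ hU' q hq
      exact ⟨U', hU'mem, inter_subset_right.trans hsub⟩
  · apply eq_univ_of_forall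
    intro x
    obtain ⟨k, hk⟩ := (hgroup x).exists
    simp only [mem_iUnion] at hk
    obtain ⟨m, hm, hx⟩ := hk
    obtain ⟨V, hVm, hxV⟩ := hx
    have hxU : x ∈ ⋃ j ∈ Set.Iio (sV m V), UV m V j := (hkey m V hVm).2 hxV
    simp only [mem_iUnion] at hxU
    obtain ⟨j, hjr, hxUj⟩ := hxU
    refine ⟨V ∩ UV m V j, ?_, hxV, hxUj⟩
    refine mem_iUnion.mpr ⟨Nat.pair m j, ?_⟩
    simp only [Nat.unpair_pair]
    exact ⟨V, hVm, hjr, rfl⟩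

end GroupedRefinementHelpers

/-- Conversely, the grouped disjoint refinement property for ω-covers implies
both `S_c(𝒪,𝒪)` and the Hurewicz property. -/
theorem sc_and_hurewicz_of_grouped_refinements
    {X : Type*} [MetricSpace X] [SeparableSpace X]
    (h : ∀ 𝒰 : ℕ → Set (Set X), (∀ n, IsOmegaCover (𝒰 n)) →
      ∃ 𝒱 : ℕ → Set (Set X),
      (∀ n, (𝒱 n).Finite ∧ (𝒱 n).PairwiseDisjoint id ∧ (∀ V ∈ 𝒱 n, IsOpen V) ∧
        (∀ V ∈ 𝒱 n, ∃ U ∈ 𝒰 n, V ⊆ U)) ∧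
      (∀ m n, m ≠ n → Disjoint (𝒱 m) (𝒱 n)) ∧
      (∃ f : ℕ → ℕ, StrictMono f ∧
        ∀ x : X, ∀ᶠ k in atTop, x ∈ ⋃ j ∈ Set.Ico (f k) (f (k + 1)), ⋃₀ 𝒱 j)) :
    SelScreenable X ∧ Hurewicz X := by
  rcases finite_or_infinite X with hfin | hinf
  · constructor
    · -- finite spaces are discrete, so singletons work
      intro 𝒰 h𝒰
      refine ⟨fun _ => {S | ∃ x : X, S = {x}}, ?_, ?_⟩
      · intro n
        refine ⟨?_, ?_, ?_⟩
        · rintro S ⟨x, rfl⟩ T ⟨y, rfl⟩ hne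
          have hxy : x ≠ y := by
            rintro rfl
            exact hne rfl
          simpa [Function.onFun] using Set.disjoint_singleton.mpr hxy
        · rintro S ⟨x, rfl⟩
          have hcl : IsClosed ({x}ᶜ : Set X) := (Set.toFinite _).isClosed
          have ho := hcl.isOpen_compl
          rwa [compl_compl] at ho
        · rintro S ⟨x, rfl⟩
          have hx : x ∈ ⋃₀ 𝒰 n := by rw [(h𝒰 n).2]; trivial
          obtain ⟨U, hU, hxU⟩ := hx
          exact ⟨U, hU, singleton_subset_iff.mpr hxU⟩
      · apply eq_univ_of_forall
        intro x
        exact ⟨{x}, mem_iUnion.mpr ⟨0, ⟨x, rfl⟩⟩, rfl⟩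
    · intro 𝒰 h𝒰
      have hmem : ∀ (n : ℕ) (x : X), ∃ U, U ∈ 𝒰 n ∧ x ∈ U := by
        intro n x
        have hx : x ∈ ⋃₀ 𝒰 n := by rw [(h𝒰 n).2]; trivial
        obtain ⟨U, hU, hxU⟩ := hx
        exact ⟨U, hU, hxU⟩
      choose u hu hxu using hmem
      refine ⟨fun n => u n '' univ, fun n => ⟨Set.finite_univ.image _, ?_⟩, ?_⟩
      · rintro _ ⟨x, -, rfl⟩
        exact hu n x
      · intro z
        exact Eventually.of_forall fun n => ⟨u n z, ⟨z, trivial, rfl⟩, hxu n z⟩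
  · exact ⟨selScreenable_of_grouped_refinements_aux h
        (hurewicz_of_grouped_refinements_aux h),
      hurewicz_of_grouped_refinements_aux h⟩
end

section
/- If X ⊆ ℝ is a Lusin set and Y ⊆ ℝ is a Sierpiński set, then X × Y has the Menger property S_fin(𝒪,𝒪). -/
open Set Filter Topology TopologicalSpace

/-!
Refine each open cover `𝒰 n` of `X × Y` to a countable cover by rectangles `A n k ×ˢ B n k` with
open sides; it suffices to bound the number of rectangles used at stage `n` by some `κ n`.

Fix points `u n ∈ X`. The slices `{y | (u n, y) ∈ A n k ×ˢ B n k}` are countable open covers of `Y`.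
Continuity of measure and Borel–Cantelli give `κ` such that outside a null set every `y` lies, from
some stage on, in one of the first `κ n` slices; since `Y` is Sierpiński the exceptional points of
`Y` are countably many and a diagonal bound absorbs them. The finitely many `A n k` with `k ≤ κ n`
containing `u n` intersect to an open neighbourhood `G n` of `u n`, and then every `x` lying in
infinitely many `G n` is handled: `limsup G ×ˢ Y` is covered.

Letting `u` enumerate a countable dense subset of `X`, each point infinitely often, `limsup G`
contains a dense subset of `X` and is a countable intersection of open sets, so as `X` is Lusin
only countably many points of `X` miss it. A second round with `u` enumerating those points covers
the rest.
-/

open MeasureTheory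

theorem IsOpen.isNowhereDense_frontier {Z : Type*} [TopologicalSpace Z] {W : Set Z}
    (hW : IsOpen W) : IsNowhereDense (frontier W) := by
  rw [isClosed_frontier.isNowhereDense_iff, ← frontier_compl]
  exact interior_frontier hW.isClosed_compl

namespace IsLusin

variable {X : Set ℝ}

theorem countable_diff_of_subset_closure (hX : IsLusin X) {W : Set ℝ} (hW : IsOpen W)
    (hXW : X ⊆ closure W) : (X \ W).Countable := by
  refine (hX.2 _ hW.isNowhereDense_frontier).mono ?_
  rintro x ⟨hxX, hxW⟩
  rw [hW.frontier_eq]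
  exact ⟨hxX, hXW hxX, hxW⟩

theorem countable_diff_limsup (hX : IsLusin X) {G : ℕ → Set ℝ} (hG : ∀ n, IsOpen (G n))
    (hXG : X ⊆ closure (limsup G atTop)) : (X \ limsup G atTop).Countable := by
  rw [limsup_eq_iInf_iSup_of_nat]
  simp only [iInf_eq_iInter, iSup_eq_iUnion, sdiff_iInter]
  refine countable_iUnion fun m ↦ hX.countable_diff_of_subset_closure
    (isOpen_biUnion fun n _ ↦ hG n) (hXG.trans (closure_mono fun x hx ↦ ?_))
  rw [mem_limsup_iff_frequently_mem, frequently_atTop] at hx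
  simpa using hx m

end IsLusin

theorem exists_bound_ae_eventually_mem_accumulate {α : Type*} [MeasurableSpace α]
    (μ : Measure α) [SigmaFinite μ] {W : ℕ → ℕ → Set α}
    (hW : ∀ n k, MeasurableSet (W n k)) :
    ∃ κ : ℕ → ℕ, ∀ᵐ y ∂μ, (∀ n, y ∈ ⋃ k, W n k) →
      ∀ᶠ n in atTop, y ∈ accumulate (W n) (κ n) := by
  set T : ℕ → ℕ → Set α := fun n j ↦
    (spanningSets μ n ∩ ⋃ k, W n k) \ accumulate (W n) j
  obtain ⟨ε, hε_pos, hε_sum⟩ := ENNReal.exists_pos_sum_of_countable' one_ne_zero ℕ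
  have hsmall : ∀ n, ∃ j, μ (T n j) < ε n := by
    intro n
    have hT_empty : ⋂ j, T n j = ∅ := by
      simp only [T, ← sdiff_iUnion, iUnion_accumulate]
      exact sdiff_eq_empty.2 inter_subset_right
    have htends : Tendsto (fun j ↦ μ (T n j)) atTop (𝓝 0) := by
      rw [← measure_empty (μ := μ), ← hT_empty]
      refine tendsto_measure_iInter_atTop (fun j ↦ ?_) (fun i j hij ↦ ?_) ⟨0, ?_⟩
      · exact (((measurableSet_spanningSets μ n).inter (.iUnion (hW n))).diff
          (.biUnion (to_countable _) fun k _ ↦ hW n k)).nullMeasurableSet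
      · exact sdiff_subset_sdiff_right (monotone_accumulate hij)
      · exact measure_ne_top_of_subset (sdiff_subset.trans inter_subset_left)
          (measure_spanningSets_lt_top μ n).ne
    exact (htends.eventually (gt_mem_nhds (hε_pos n))).exists
  choose κ hκ using hsmall
  have hsum : ∑' n, μ (T n (κ n)) ≠ ⊤ :=
    ne_top_of_le_ne_top (hε_sum.trans ENNReal.one_lt_top).ne
      (ENNReal.tsum_le_tsum fun n ↦ (hκ n).le)
  refine ⟨κ, ?_⟩
  filter_upwards [ae_eventually_notMem hsum] with y hy hcov
  filter_upwards [hy, eventually_mem_spanningSets μ y] with n hyT hyK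
  by_contra hyA
  exact hyT ⟨⟨hyK, hcov n⟩, hyA⟩

theorem Set.Countable.exists_bound_eventually_mem_accumulate {α : Type*} {C : Set α}
    (hC : C.Countable) {W : ℕ → ℕ → Set α} (hCW : ∀ n, C ⊆ ⋃ k, W n k) :
    ∃ κ : ℕ → ℕ, ∀ y ∈ C, ∀ᶠ n in atTop, y ∈ accumulate (W n) (κ n) := by
  rcases C.eq_empty_or_nonempty with rfl | hne
  · exact ⟨0, by simp⟩
  obtain ⟨c, rfl⟩ := hC.exists_eq_range hne
  choose k hk using fun n i ↦ mem_iUnion.1 (hCW n (mem_range_self i))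
  refine ⟨fun n ↦ (Finset.range (n + 1)).sup (k n), ?_⟩
  rintro _ ⟨i, rfl⟩
  refine eventually_atTop.2 ⟨i, fun n hin ↦ mem_accumulate.2 ⟨k n i, ?_, hk n i⟩⟩
  exact Finset.le_sup (Finset.mem_range.2 (Nat.lt_succ_of_le hin))

theorem IsSierpinski.exists_bound_eventually_mem_accumulate {Y : Set ℝ} (hY : IsSierpinski Y)
    {W : ℕ → ℕ → Set ℝ} (hW : ∀ n k, MeasurableSet (W n k)) (hYW : ∀ n, Y ⊆ ⋃ k, W n k) :
    ∃ κ : ℕ → ℕ, ∀ y ∈ Y, ∀ᶠ n in atTop, y ∈ accumulate (W n) (κ n) := by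
  obtain ⟨κ₀, hκ₀⟩ := exists_bound_ae_eventually_mem_accumulate volume hW
  rw [ae_iff] at hκ₀
  set N := {y | ¬((∀ n, y ∈ ⋃ k, W n k) → ∀ᶠ n in atTop, y ∈ accumulate (W n) (κ₀ n))}
  obtain ⟨κ₁, hκ₁⟩ := (hY.2 N hκ₀).exists_bound_eventually_mem_accumulate
    fun n ↦ inter_subset_left.trans (hYW n)
  refine ⟨fun n ↦ max (κ₀ n) (κ₁ n), fun y hy ↦ ?_⟩
  by_cases hyN : y ∈ N
  · filter_upwards [hκ₁ y ⟨hy, hyN⟩] with n hn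
    exact monotone_accumulate (le_max_right _ _) hn
  · filter_upwards [not_not.1 hyN fun n ↦ hYW n hy] with n hn
    exact monotone_accumulate (le_max_left _ _) hn

section Rectangles

variable {X Y : Set ℝ} {A B : ℕ → ℕ → Set ℝ}

theorem IsSierpinski.exists_limsup_prod_subset (hY : IsSierpinski Y)
    (hA : ∀ n k, IsOpen (A n k)) (hB : ∀ n k, IsOpen (B n k)) {u : ℕ → ℝ}
    (hu : ∀ n, {u n} ×ˢ Y ⊆ ⋃ k, A n k ×ˢ B n k) :
    ∃ κ : ℕ → ℕ, ∃ G : ℕ → Set ℝ, (∀ n, IsOpen (G n)) ∧ (∀ n, u n ∈ G n) ∧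
      limsup G atTop ×ˢ Y ⊆ ⋃ n, ⋃ k ≤ κ n, A n k ×ˢ B n k := by
  obtain ⟨κ, hκ⟩ := hY.exists_bound_eventually_mem_accumulate
    (W := fun n k ↦ Prod.mk (u n) ⁻¹' (A n k ×ˢ B n k))
    (fun n k ↦ (((hA n k).prod (hB n k)).preimage (.prodMk_right (u n))).measurableSet)
    (fun n y hy ↦ by simpa using hu n (mk_mem_prod (mem_singleton _) hy))
  refine ⟨κ, fun n ↦ ⋂ k ∈ {k | k ≤ κ n ∧ u n ∈ A n k}, A n k,
    fun n ↦ ((finite_Iic (κ n)).subset fun k hk ↦ hk.1).isOpen_biInter fun k _ ↦ hA n k,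
    fun n ↦ mem_iInter₂.2 fun k hk ↦ hk.2, ?_⟩
  rintro ⟨x, y⟩ ⟨hx, hy⟩
  rw [mem_limsup_iff_frequently_mem] at hx
  obtain ⟨n, hxG, hyW⟩ := (hx.and_eventually (hκ y hy)).exists
  obtain ⟨k, hk, huA, hyB⟩ := mem_accumulate.1 hyW
  exact mem_iUnion.2 ⟨n, mem_iUnion₂.2 ⟨k, hk, mem_iInter₂.1 hxG k ⟨hk, huA⟩, hyB⟩⟩

theorem IsSierpinski.exists_limsup_prod_subset_of_countable (hY : IsSierpinski Y)
    (hA : ∀ n k, IsOpen (A n k)) (hB : ∀ n k, IsOpen (B n k)) {C : Set ℝ} (hC : C.Countable)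
    (hCY : ∀ n, C ×ˢ Y ⊆ ⋃ k, A n k ×ˢ B n k) :
    ∃ κ : ℕ → ℕ, ∃ G : ℕ → Set ℝ, (∀ n, IsOpen (G n)) ∧ C ⊆ limsup G atTop ∧
      limsup G atTop ×ˢ Y ⊆ ⋃ n, ⋃ k ≤ κ n, A n k ×ˢ B n k := by
  rcases C.eq_empty_or_nonempty with rfl | hne
  · exact ⟨0, fun _ ↦ ∅, fun _ ↦ isOpen_empty, empty_subset _, by simp⟩
  obtain ⟨c, rfl⟩ := hC.exists_eq_range hne
  obtain ⟨κ, G, hG, hcG, hGY⟩ := hY.exists_limsup_prod_subset hA hB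
    (u := fun n ↦ c n.unpair.1) fun n ↦ (prod_mono (by simp) subset_rfl).trans (hCY n)
  refine ⟨κ, G, hG, ?_, hGY⟩
  rintro _ ⟨i, rfl⟩
  refine mem_limsup_iff_frequently_mem.2 (frequently_atTop.2 fun m ↦
    ⟨Nat.pair i m, Nat.right_le_pair i m, ?_⟩)
  simpa using hcG (Nat.pair i m)

theorem IsLusin.exists_bound_prod_subset (hX : IsLusin X) (hY : IsSierpinski Y)
    (hA : ∀ n k, IsOpen (A n k)) (hB : ∀ n k, IsOpen (B n k))
    (hXY : ∀ n, X ×ˢ Y ⊆ ⋃ k, A n k ×ˢ B n k) :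
    ∃ κ : ℕ → ℕ, X ×ˢ Y ⊆ ⋃ n, ⋃ k ≤ κ n, A n k ×ˢ B n k := by
  have hcov : ∀ C ⊆ X, ∀ n, C ×ˢ Y ⊆ ⋃ k, A n k ×ˢ B n k :=
    fun C hC n ↦ (prod_mono hC subset_rfl).trans (hXY n)
  obtain ⟨D, hDX, hD, hXD⟩ := (IsSeparable.of_separableSpace X).exists_countable_dense_subset
  obtain ⟨κ₁, G₁, hG₁, hDG₁, hG₁Y⟩ :=
    hY.exists_limsup_prod_subset_of_countable hA hB hD (hcov D hDX)
  have hE : (X \ limsup G₁ atTop).Countable :=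
    hX.countable_diff_limsup hG₁ (hXD.trans (closure_mono hDG₁))
  obtain ⟨κ₂, G₂, -, hEG₂, hG₂Y⟩ :=
    hY.exists_limsup_prod_subset_of_countable hA hB hE (hcov _ sdiff_subset)
  have hmono : ∀ κ : ℕ → ℕ, (∀ n, κ n ≤ max (κ₁ n) (κ₂ n)) →
      ⋃ n, ⋃ k ≤ κ n, A n k ×ˢ B n k ⊆ ⋃ n, ⋃ k ≤ max (κ₁ n) (κ₂ n), A n k ×ˢ B n k :=
    fun κ hκ ↦ iUnion_mono fun n ↦ monotone_accumulate (hκ n)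
  refine ⟨fun n ↦ max (κ₁ n) (κ₂ n), ?_⟩
  rintro ⟨x, y⟩ ⟨hx, hy⟩
  by_cases hx₁ : x ∈ limsup G₁ atTop
  · exact hmono κ₁ (fun n ↦ le_max_left _ _) (hG₁Y ⟨hx₁, hy⟩)
  · exact hmono κ₂ (fun n ↦ le_max_right _ _) (hG₂Y ⟨hEG₂ ⟨hx, hx₁⟩, hy⟩)

end Rectangles

section Menger

open TopologicalSpace

variable (α β : Type*) [TopologicalSpace α] [TopologicalSpace β]
  [SecondCountableTopology α] [SecondCountableTopology β]

theorem exists_seq_basis_prod :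
    ∃ (a : ℕ → Set α) (b : ℕ → Set β), (∀ k, IsOpen (a k)) ∧ (∀ k, IsOpen (b k)) ∧
      IsTopologicalBasis (range fun k ↦ a k ×ˢ b k) := by
  obtain ⟨a, ha⟩ := exists_seq_basis α
  obtain ⟨b, hb⟩ := exists_seq_basis β
  refine ⟨fun k ↦ a k.unpair.1, fun k ↦ b k.unpair.2, fun k ↦ ha.isOpen (mem_range_self _),
    fun k ↦ hb.isOpen (mem_range_self _), ?_⟩
  convert ha.prod hb using 1
  ext s
  simp only [mem_range, mem_image2, exists_exists_eq_and]
  constructor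
  · rintro ⟨k, rfl⟩
    exact ⟨_, _, rfl⟩
  · rintro ⟨i, j, rfl⟩
    exact ⟨Nat.pair i j, by simp⟩

variable {α β}

theorem menger_prod_of_exists_bound {X : Set α} {Y : Set β}
    (h : ∀ (A : ℕ → ℕ → Set α) (B : ℕ → ℕ → Set β), (∀ n k, IsOpen (A n k)) →
      (∀ n k, IsOpen (B n k)) → (∀ n, X ×ˢ Y ⊆ ⋃ k, A n k ×ˢ B n k) →
      ∃ κ : ℕ → ℕ, X ×ˢ Y ⊆ ⋃ n, ⋃ k ≤ κ n, A n k ×ˢ B n k) :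
    Menger (X × Y) := by
  intro 𝒰 h𝒰
  obtain ⟨a, b, ha, hb, hab⟩ := exists_seq_basis_prod α β
  set e : X × Y → α × β := Prod.map Subtype.val Subtype.val
  have he : IsInducing e := IsInducing.subtypeVal.prodMap .subtypeVal
  set refines : ℕ → ℕ → Prop := fun n k ↦ ∃ U ∈ 𝒰 n, e ⁻¹' (a k ×ˢ b k) ⊆ U
  choose S hS𝒰 hSab using fun n k (hk : refines n k) ↦ hk
  have hcov : ∀ n, X ×ˢ Y ⊆ ⋃ k, (⋃ _ : refines n k, a k) ×ˢ b k := by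
    rintro n z ⟨hz₁, hz₂⟩
    have hz : ((⟨z.1, hz₁⟩, ⟨z.2, hz₂⟩) : X × Y) ∈ ⋃₀ 𝒰 n := (h𝒰 n).2 ▸ mem_univ _
    obtain ⟨U, hU, hzU⟩ := mem_sUnion.1 hz
    obtain ⟨V, hV, rfl⟩ := he.isOpen_iff.1 ((h𝒰 n).1 U hU)
    obtain ⟨_, ⟨k, rfl⟩, hzk, hkV⟩ := hab.exists_subset_of_mem_open hzU hV
    exact mem_iUnion.2 ⟨k, ⟨mem_iUnion.2 ⟨⟨_, hU, preimage_mono hkV⟩, hzk.1⟩, hzk.2⟩⟩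
  obtain ⟨κ, hκ⟩ := h (fun n k ↦ ⋃ _ : refines n k, a k) (fun _ k ↦ b k)
    (fun n k ↦ isOpen_iUnion fun _ ↦ ha k) (fun _ k ↦ hb k) hcov
  refine ⟨fun n ↦ ⋃ k ≤ κ n, ⋃ hk : refines n k, {S n k hk}, fun n ↦ ⟨?_, ?_⟩, ?_⟩
  · exact (finite_Iic (κ n)).biUnion fun k _ ↦ finite_iUnion fun _ ↦ finite_singleton _
  · exact iUnion₂_subset fun k _ ↦ iUnion_subset fun hk ↦ singleton_subset_iff.2 (hS𝒰 n k hk)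
  · refine eq_univ_of_forall fun p ↦ ?_
    obtain ⟨n, k, hk, ⟨hnk, hpa⟩, hpb⟩ :
        ∃ n, ∃ k ≤ κ n, (refines n k ∧ (p.1 : α) ∈ a k) ∧ (p.2 : β) ∈ b k := by
      simpa only [mem_iUnion, mem_prod, exists_prop] using hκ (mk_mem_prod p.1.2 p.2.2)
    exact mem_sUnion.2 ⟨S n k hnk, mem_iUnion.2 ⟨n, mem_iUnion₂.2 ⟨k, hk,
      mem_iUnion.2 ⟨hnk, rfl⟩⟩⟩, hSab n k hnk ⟨hpa, hpb⟩⟩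

end Menger

/-- The product of a Lusin set and a Sierpiński set has the Menger property. -/
theorem menger_lusin_prod_sierpinski
    (X Y : Set ℝ) (hX : IsLusin X) (hY : IsSierpinski Y) :
    Menger (↥X × ↥Y) :=
  menger_prod_of_exists_bound fun _ _ hA hB hXY ↦ hX.exists_bound_prod_subset hY hA hB hXY
end

section
/- If S ⊆ ℝ is a Sierpiński set, then player TWO has a winning strategy in the game G_fin^{ω+ω}(𝒪,𝒪) played on S. -/
open Set Filter Topology TopologicalSpace

/-! From every open cover of a subspace `S` of a second countable space one can pick finitely
many members covering `S` up to an arbitrarily small outer measure on a set of finite measure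
(a countable subcover, then continuity of the measure along its finite partial unions). Using
this with error `1/n` on the `n`-th spanning set, the points of `S` missed in the first `ω`
innings form a null set, which a Sierpiński set meets in a countable set; TWO covers those
points one at a time during the last `ω` innings. -/

section Game

open Ordinal Classical

variable {Z : Type*} (φ : Set (Set Z) → ℕ → Set (Set Z))

def residue (O : ℕ → Set (Set Z)) : Set Z := (⋃ n, ⋃₀ φ (O n) n)ᶜ

noncomputable def residueIndex (O : ℕ → Set (Set Z)) : Z → ℕ :=
  epsilon fun e ↦ InjOn e (residue φ O)

theorem injOn_residueIndex {O : ℕ → Set (Set Z)} (h : (residue φ O).Countable) :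
    InjOn (residueIndex φ O) (residue φ O) :=
  epsilon_spec (countable_iff_exists_injOn.1 h)

noncomputable def coveringMember (𝒰 : Set (Set Z)) (z : Z) : Set Z :=
  epsilon fun U ↦ U ∈ 𝒰 ∧ z ∈ U

theorem coveringMember_spec {𝒰 : Set (Set Z)} {z : Z} (h : z ∈ ⋃₀ 𝒰) :
    coveringMember 𝒰 z ∈ 𝒰 ∧ z ∈ coveringMember 𝒰 z :=
  epsilon_spec h

-- `γ.card.toNat` is `n` at the inning `γ = n`, and `k` at `γ = ω + k` once `ω` is subtracted.
noncomputable def omegaAddOmegaStrategy (O : Ordinal.{0} → Set (Set Z)) (γ : Ordinal.{0}) :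
    Set (Set Z) :=
  if γ < ω then φ (O γ) γ.card.toNat
  else
    coveringMember (O γ) ''
      {z ∈ residue φ (fun n : ℕ ↦ O n) | residueIndex φ (fun n : ℕ ↦ O n) z = (γ - ω).card.toNat}

variable {φ}

theorem omegaAddOmegaStrategy_natCast (O : Ordinal.{0} → Set (Set Z)) (n : ℕ) :
    omegaAddOmegaStrategy φ O n = φ (O n) n := by
  simp [omegaAddOmegaStrategy]

theorem omegaAddOmegaStrategy_omega0_add (O : Ordinal.{0} → Set (Set Z)) (k : ℕ) :
    omegaAddOmegaStrategy φ O (ω + k) = coveringMember (O (ω + k)) ''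
      {z ∈ residue φ (fun n : ℕ ↦ O n) | residueIndex φ (fun n : ℕ ↦ O n) z = k} := by
  simp [omegaAddOmegaStrategy]

theorem omegaAddOmegaStrategy_eq_of_agree {O O' : Ordinal.{0} → Set (Set Z)} {γ : Ordinal.{0}}
    (h : ∀ β ≤ γ, O β = O' β) : omegaAddOmegaStrategy φ O γ = omegaAddOmegaStrategy φ O' γ := by
  unfold omegaAddOmegaStrategy
  split_ifs with hγ
  · rw [h γ le_rfl]
  · have hnat : (fun n : ℕ ↦ O n) = fun n : ℕ ↦ O' n :=
      funext fun n ↦ h n ((natCast_lt_omega0 n).le.trans (not_lt.1 hγ))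
    rw [h γ le_rfl, hnat]

theorem twoWinsGfin_omega0_add_omega0_of_countable_residue [TopologicalSpace Z]
    (hφ : ∀ (𝒰 : Set (Set Z)) n, IsOpenCover 𝒰 → (φ 𝒰 n).Finite ∧ φ 𝒰 n ⊆ 𝒰)
    (hres : ∀ O : ℕ → Set (Set Z), (∀ n, IsOpenCover (O n)) → (residue φ O).Countable) :
    TwoWinsGfin Z (ω + ω) := by
  refine ⟨omegaAddOmegaStrategy φ, fun O O' γ ↦ omegaAddOmegaStrategy_eq_of_agree, fun O hO ↦ ?_⟩
  have hnat_lt (n : ℕ) : (n : Ordinal) < ω + ω := (natCast_lt_omega0 n).trans_le le_self_add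
  set R := residue φ fun n : ℕ ↦ O n
  have hR : InjOn (residueIndex φ fun n : ℕ ↦ O n) R :=
    injOn_residueIndex φ (hres _ fun n ↦ hO n (hnat_lt n))
  have hmember {γ} (hγ : γ < ω + ω) (z : Z) :=
    coveringMember_spec ((hO γ hγ).2.symm.subset (mem_univ z))
  refine ⟨fun γ hγ ↦ ?_, fun z ↦ ?_⟩
  · unfold omegaAddOmegaStrategy
    split_ifs
    · exact hφ _ _ (hO γ hγ)
    · have hsub (k : ℕ) : Set.Subsingleton {z ∈ R | residueIndex φ (fun n : ℕ ↦ O n) z = k} :=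
        fun x hx y hy ↦ hR hx.1 hy.1 (hx.2.trans hy.2.symm)
      exact ⟨(hsub _).finite.image _, image_subset_iff.2 fun z _ ↦ (hmember hγ z).1⟩
  · by_cases hz : z ∈ R
    · have hγ : ω + (residueIndex φ (fun n : ℕ ↦ O n) z : Ordinal) < ω + ω :=
        add_lt_add_right (natCast_lt_omega0 _) ω
      refine ⟨_, hγ, ?_⟩
      rw [omegaAddOmegaStrategy_omega0_add]
      exact ⟨_, ⟨z, ⟨hz, rfl⟩, rfl⟩, (hmember hγ z).2⟩
    · obtain ⟨n, hn⟩ := mem_iUnion.1 (not_not.1 hz)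
      exact ⟨n, hnat_lt n, by rwa [omegaAddOmegaStrategy_natCast]⟩

end Game

open MeasureTheory ENNReal

section Measure

variable {X : Type*} [MeasurableSpace X] (μ : Measure X)

theorem exists_finset_measure_diff_biUnion_lt {ι : Type*} [Countable ι] {W : ι → Set X}
    (hW : ∀ i, MeasurableSet (W i)) {B : Set X} (hB : B ⊆ ⋃ i, W i) (hμB : μ B ≠ ∞)
    {ε : ℝ≥0∞} (hε : 0 < ε) : ∃ t : Finset ι, μ (B \ ⋃ i ∈ t, W i) < ε := by
  set D : Finset ι → Set X := fun t ↦ toMeasurable μ B \ ⋃ i ∈ t, W i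
  have hD_anti : Antitone D := fun s t hst ↦
    sdiff_subset_sdiff_right (biUnion_subset_biUnion_left hst)
  have hD_meas (t : Finset ι) : NullMeasurableSet (D t) μ :=
    ((measurableSet_toMeasurable μ B).diff
      (.biUnion t.countable_toSet fun i _ ↦ hW i)).nullMeasurableSet
  have hD_fin : μ (D ∅) ≠ ∞ := by simpa [D, measure_toMeasurable] using hμB
  have hD_inter : μ (⋂ t, D t) = 0 := by
    have : ⋂ t, D t = toMeasurable μ B \ ⋃ i, W i := by
      rw [iUnion_eq_iUnion_finset W, sdiff_iUnion]
    rw [this, sdiff_eq, Measure.measure_toMeasurable_inter (MeasurableSet.iUnion hW).compl hμB,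
      ← sdiff_eq, sdiff_eq_empty.2 hB, measure_empty]
  have hlim := tendsto_measure_iInter_atTop hD_meas hD_anti ⟨∅, hD_fin⟩
  rw [hD_inter] at hlim
  obtain ⟨t, ht⟩ := (hlim.eventually (gt_mem_nhds hε)).exists
  exact ⟨t, (measure_mono (sdiff_subset_sdiff_left (subset_toMeasurable μ B))).trans_lt ht⟩

variable [TopologicalSpace X] [SecondCountableTopology X] [OpensMeasurableSpace X]

theorem exists_finite_subset_measure_image_compl_sUnion_inter_lt {S : Set X}
    {𝒰 : Set (Set S)} (h𝒰 : IsOpenCover 𝒰) {K : Set X} (hK : μ K ≠ ∞) {ε : ℝ≥0∞}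
    (hε : 0 < ε) : ∃ 𝒯 ⊆ 𝒰, 𝒯.Finite ∧ μ (((↑) : S → X) '' (⋃₀ 𝒯)ᶜ ∩ K) < ε := by
  obtain ⟨𝒱, h𝒱c, h𝒱𝒰, h𝒱⟩ := isOpen_sUnion_countable 𝒰 h𝒰.1
  have := h𝒱c.to_subtype
  choose W hW using fun U : 𝒱 ↦ isOpen_induced_iff.mp (h𝒰.1 U (h𝒱𝒰 U.2))
  have hcover : S ∩ K ⊆ ⋃ U, W U := by
    rintro x ⟨hxS, -⟩
    obtain ⟨U, hU, hxU⟩ : (⟨x, hxS⟩ : S) ∈ ⋃₀ 𝒱 := h𝒱 ▸ h𝒰.2 ▸ mem_univ _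
    have : (⟨x, hxS⟩ : S) ∈ ((↑) ⁻¹' W ⟨U, hU⟩ : Set S) := (hW ⟨U, hU⟩).2 ▸ hxU
    exact mem_iUnion.2 ⟨⟨U, hU⟩, this⟩
  obtain ⟨t, ht⟩ := exists_finset_measure_diff_biUnion_lt μ (fun U ↦ (hW U).1.measurableSet)
    hcover (measure_ne_top_of_subset inter_subset_right hK) hε
  refine ⟨(↑) '' (t : Set 𝒱), ?_, t.finite_toSet.image _, (measure_mono ?_).trans_lt ht⟩
  · rintro _ ⟨U, -, rfl⟩
    exact h𝒱𝒰 U.2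
  · rintro _ ⟨⟨⟨x, hxS⟩, hx𝒯, rfl⟩, hxK⟩
    refine ⟨⟨hxS, hxK⟩, fun hxW ↦ hx𝒯 ?_⟩
    obtain ⟨U, hUt, hxU⟩ := mem_iUnion₂.1 hxW
    exact ⟨U, mem_image_of_mem _ hUt, by rwa [← (hW U).2]⟩

theorem exists_finite_selections_measure_image_residue_eq_zero [SigmaFinite μ] (S : Set X) :
    ∃ φ : Set (Set S) → ℕ → Set (Set S),
      (∀ (𝒰 : Set (Set S)) n, IsOpenCover 𝒰 → (φ 𝒰 n).Finite ∧ φ 𝒰 n ⊆ 𝒰) ∧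
      ∀ O : ℕ → Set (Set S), (∀ n, IsOpenCover (O n)) →
        μ (((↑) : S → X) '' residue φ O) = 0 := by
  have : ∀ (𝒰 : Set (Set S)) (n : ℕ), ∃ 𝒯, IsOpenCover 𝒰 → 𝒯 ⊆ 𝒰 ∧ 𝒯.Finite ∧
      μ (((↑) : S → X) '' (⋃₀ 𝒯)ᶜ ∩ spanningSets μ n) < (n : ℝ≥0∞)⁻¹ := by
    intro 𝒰 n
    by_cases h𝒰 : IsOpenCover 𝒰
    · obtain ⟨𝒯, h𝒯⟩ := exists_finite_subset_measure_image_compl_sUnion_inter_lt μ h𝒰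
        (measure_spanningSets_lt_top μ n).ne (ENNReal.inv_pos.2 (natCast_ne_top n))
      exact ⟨𝒯, fun _ ↦ h𝒯⟩
    · exact ⟨∅, fun h ↦ absurd h h𝒰⟩
  choose φ hφ using this
  refine ⟨φ, fun 𝒰 n h ↦ ⟨(hφ 𝒰 n h).2.1, (hφ 𝒰 n h).1⟩, fun O hO ↦ ?_⟩
  set R := ((↑) : S → X) '' residue φ O
  have hR : ∀ k, μ (R ∩ spanningSets μ k) = 0 := fun k ↦ nonpos_iff_eq_zero.1 <|
    ge_of_tendsto ENNReal.tendsto_inv_nat_nhds_zero <| eventually_atTop.2 ⟨k, fun n hkn ↦ by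
      refine (measure_mono (inter_subset_inter ?_ (monotone_spanningSets μ hkn))).trans
        (hφ (O n) n (hO n)).2.2.le
      exact image_mono (compl_subset_compl.2 (subset_iUnion (fun n ↦ ⋃₀ φ (O n) n) n))⟩
  rw [← inter_univ R, ← iUnion_spanningSets μ, inter_iUnion]
  exact measure_iUnion_null hR

end Measure

/-- If `S` is a Sierpiński set then TWO has a winning strategy in
`G_fin^{ω+ω}(𝒪,𝒪)` played on `S`. -/
theorem sierpinski_twoWinsGfin_omega_add_omega
    (S : Set ℝ) (hS : IsSierpinski S) :
    TwoWinsGfin ↥S (Ordinal.omega0 + Ordinal.omega0) := by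
  obtain ⟨φ, hφ, hnull⟩ := exists_finite_selections_measure_image_residue_eq_zero volume S
  refine twoWinsGfin_omega0_add_omega0_of_countable_residue hφ fun O hO ↦ ?_
  have hcount := hS.2 _ (hnull O hO)
  rw [inter_eq_right.2 (Subtype.coe_image_subset S _)] at hcount
  exact countable_of_injective_of_countable_image Subtype.val_injective.injOn hcount
end

section
/- Every Sierpiński set S ⊆ ℝ satisfies S_1(Γ,Γ): for every sequence (𝒰_n) of γ-covers of S one can choose U_n ∈ 𝒰_n such that {U_n : n < ∞} is a γ-cover of S. -/
open Set Filter Topology TopologicalSpace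

theorem exists_injective_selection {α : Type*} (E : ℕ → ℕ → α)
    (hE : ∀ n, Function.Injective (E n)) (g : ℕ → ℕ) :
    ∃ ks : ℕ → ℕ, (∀ n, g n ≤ ks n) ∧ Function.Injective (fun n => E n (ks n)) := by
  classical
  have key : ∀ n (T : Finset α), ∃ k, g n ≤ k ∧ E n k ∉ T := by
    intro n T
    have h1 : {k | E n k ∈ (T : Set α)}.Finite :=
      Set.Finite.preimage (hE n).injOn T.finite_toSet
    obtain ⟨k, hk⟩ := ((Set.Ici_infinite (g n)).diff h1).nonempty
    exact ⟨k, hk.1, by simpa using hk.2⟩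
  let pick : ℕ → Finset α → ℕ := fun n T => (key n T).choose
  let st : ℕ → ℕ × Finset α := fun n =>
    Nat.rec (pick 0 ∅, {E 0 (pick 0 ∅)})
      (fun m p => (pick (m + 1) p.2, insert (E (m + 1) (pick (m + 1) p.2)) p.2)) n
  let ks : ℕ → ℕ := fun n => (st n).1
  have hst0 : st 0 = (pick 0 ∅, {E 0 (pick 0 ∅)}) := rfl
  have hstsucc : ∀ n, st (n + 1) =
      (pick (n + 1) (st n).2, insert (E (n + 1) (pick (n + 1) (st n).2)) (st n).2) := fun n => rfl
  have hks0 : ks 0 = pick 0 ∅ := rfl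
  have hkssucc : ∀ n, ks (n + 1) = pick (n + 1) (st n).2 := fun n => rfl
  have hmem : ∀ n, ∀ j ≤ n, E j (ks j) ∈ (st n).2 := by
    intro n
    induction n with
    | zero => intro j hj; interval_cases j; simp [hst0, hks0]
    | succ m ih =>
      intro j hj
      rw [hstsucc m]
      rcases Nat.lt_or_ge j (m + 1) with h | h
      · exact Finset.mem_insert_of_mem (ih j (Nat.lt_succ_iff.mp h))
      · have : j = m + 1 := le_antisymm hj h
        subst this
        rw [hkssucc m]
        exact Finset.mem_insert_self _ _
  have hnot : ∀ n, E (n + 1) (ks (n + 1)) ∉ (st n).2 := by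
    intro n
    rw [hkssucc n]
    exact (key (n + 1) (st n).2).choose_spec.2
  have hge : ∀ n, g n ≤ ks n := by
    intro n
    cases n with
    | zero => exact (key 0 ∅).choose_spec.1
    | succ m => rw [hkssucc m]; exact (key (m + 1) (st m).2).choose_spec.1
  refine ⟨ks, hge, ?_⟩
  intro a b hab
  by_contra hne
  wlog hlt : a < b generalizing a b
  · exact this hab.symm (Ne.symm hne) (by omega)
  obtain ⟨m, rfl⟩ : ∃ m, b = m + 1 := ⟨b - 1, by omega⟩
  apply hnot m
  have hab' : E a (ks a) = E (m + 1) (ks (m + 1)) := hab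
  exact hab' ▸ hmem m a (by omega)

/-- Every Sierpiński set satisfies `S_1(Γ,Γ)`. -/
theorem sierpinski_s1_gamma_gamma
    (S : Set ℝ) (hS : IsSierpinski S)
    (𝒰 : ℕ → Set (Set ↥S)) (h𝒰 : ∀ n, IsGammaCover (𝒰 n)) :
    ∃ U : ℕ → Set ↥S, (∀ n, U n ∈ 𝒰 n) ∧ IsGammaCover (range U) := by
  classical
  -- injective enumerations of (part of) each cover
  have hEex : ∀ n, ∃ E : ℕ → Set ↥S, Function.Injective E ∧ ∀ k, E k ∈ 𝒰 n := by
    intro n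
    refine ⟨fun k => (Set.Infinite.natEmbedding _ (h𝒰 n).1 k : Set ↥S), ?_,
      fun k => (Set.Infinite.natEmbedding _ (h𝒰 n).1 k).2⟩
    intro a b hab
    exact (Set.Infinite.natEmbedding _ (h𝒰 n).1).injective (Subtype.coe_injective hab)
  choose E hEinj hEmem using hEex
  have hopen : ∀ n k, IsOpen (E n k) := fun n k => (h𝒰 n).2.1 _ (hEmem n k)
  -- open extensions to ℝ
  have hVex : ∀ n k, ∃ V : Set ℝ, IsOpen V ∧ Subtype.val ⁻¹' V = E n k := by
    intro n k
    exact isOpen_induced_iff.mp (hopen n k)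
  choose V hVopen hVpre using hVex
  -- the Borel sets A n m
  set A : ℕ → ℕ → Set ℝ := fun n m => ⋂ k, ⋂ (_ : m ≤ k), V n k with hA
  have hAmeas : ∀ n m, MeasurableSet (A n m) := fun n m =>
    MeasurableSet.iInter fun k => MeasurableSet.iInter fun _ => (hVopen n k).measurableSet
  have hAmono : ∀ n, Monotone (A n) := by
    intro n a b hab x hx
    simp only [hA, mem_iInter] at hx ⊢
    exact fun k hk => hx k (hab.trans hk)
  have hmemA : ∀ (z : ↥S) (n m : ℕ), (z : ℝ) ∈ A n m ↔ ∀ k, m ≤ k → z ∈ E n k := by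
    intro z n m
    simp only [hA, mem_iInter]
    constructor
    · intro h k hk
      rw [← hVpre n k]
      exact h k hk
    · intro h k hk
      have := h k hk
      rw [← hVpre n k] at this
      exact this
  -- every point of S is eventually in each enumeration
  have hbound : ∀ (z : ↥S) (n : ℕ), ∃ m, ∀ k, m ≤ k → z ∈ E n k := by
    intro z n
    have h1 : {U ∈ 𝒰 n | z ∉ U}.Finite := (h𝒰 n).2.2 z
    have hfin : {k | z ∉ E n k}.Finite := by
      refine ((h1.preimage (hEinj n).injOn).subset ?_)
      exact fun k hk => ⟨hEmem n k, hk⟩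
    obtain ⟨b, hb⟩ := hfin.bddAbove
    refine ⟨b + 1, fun k hk => ?_⟩
    by_contra h
    have := hb h
    omega
  choose F hF using hbound
  -- the measurable hull of S
  set H : Set ℝ := MeasureTheory.toMeasurable MeasureTheory.volume S with hH
  have hSH : S ⊆ H := MeasureTheory.subset_toMeasurable _ _
  have hnullsub : ∀ Z : Set ℝ, MeasurableSet Z → Z ⊆ H → S ∩ Z = ∅ →
      MeasureTheory.volume Z = 0 := by
    intro Z hZm hZH hZS
    have h1 := MeasureTheory.Measure.measure_toMeasurable_inter_of_sFinite (μ := MeasureTheory.volume) hZm S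
    rw [hZS] at h1
    have hHZ : H ∩ Z = Z := inter_eq_self_of_subset_right hZH
    rw [← hH] at h1
    simpa [hHZ] using h1
  -- choose good indices m n by continuity from above
  have hchoose : ∀ n : ℕ, ∃ m, MeasureTheory.volume
      ((H ∩ Icc (-(n + 1 : ℝ)) (n + 1)) \ A n m) < (1 / 2) ^ n := by
    intro n
    set C : ℕ → Set ℝ := fun m => (H ∩ Icc (-(n + 1 : ℝ)) (n + 1)) \ A n m with hC
    have hCmeas : ∀ m, MeasurableSet (C m) := fun m =>
      ((MeasureTheory.measurableSet_toMeasurable _ _).inter measurableSet_Icc).diff (hAmeas n m)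
    have hanti : Antitone C := fun a b hab => diff_subset_diff_right (hAmono n hab)
    have hfin0 : MeasureTheory.volume (C 0) ≠ ⊤ := by
      refine ne_of_lt (lt_of_le_of_lt
        (MeasureTheory.measure_mono (?_ : C 0 ⊆ Icc (-(n + 1 : ℝ)) (n + 1)))
        measure_Icc_lt_top)
      exact fun x hx => hx.1.2
    have hint : MeasureTheory.volume (⋂ m, C m) = 0 := by
      apply hnullsub
      · exact MeasurableSet.iInter hCmeas
      · exact fun x hx => (mem_iInter.mp hx 0).1.1
      · rw [eq_empty_iff_forall_notMem]
        rintro x ⟨hxS, hxC⟩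
        have hx : x ∈ C (F ⟨x, hxS⟩ n) := mem_iInter.mp hxC _
        exact hx.2 ((hmemA ⟨x, hxS⟩ n _).mpr (hF ⟨x, hxS⟩ n))
    have htend := MeasureTheory.tendsto_measure_iInter_atTop
      (fun m => (hCmeas m).nullMeasurableSet) hanti ⟨0, hfin0⟩
    rw [hint] at htend
    have hpos : (0 : ENNReal) < (1 / 2) ^ n := ENNReal.pow_pos (by norm_num) n
    exact (htend.eventually_lt_const hpos).exists
  choose m hm using hchoose
  -- Borel–Cantelli
  set B : ℕ → Set ℝ := fun n => (H ∩ Icc (-(n + 1 : ℝ)) (n + 1)) \ A n (m n) with hB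
  set N : Set ℝ := limsup B atTop with hNdef
  have hN : MeasureTheory.volume N = 0 := by
    apply MeasureTheory.measure_limsup_atTop_eq_zero
    refine ne_top_of_le_ne_top ?_ (ENNReal.tsum_le_tsum fun n => (hm n).le)
    rw [ENNReal.tsum_geometric, one_div, ENNReal.one_sub_inv_two]
    exact ENNReal.inv_ne_top.mpr (by norm_num)
  -- the exceptional countable set
  have hDc : (Subtype.val ⁻¹' N : Set ↥S).Countable := by
    have h1 : (S ∩ N).Countable := hS.2 N hN
    have h2 : (Subtype.val ⁻¹' N : Set ↥S) = Subtype.val ⁻¹' (S ∩ N) := by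
      ext z; simp [z.2]
    rw [h2]
    exact h1.preimage Subtype.coe_injective
  have hSne : S.Nonempty := by
    rcases S.eq_empty_or_nonempty with h | h
    · exact absurd (h ▸ countable_empty) hS.1
    · exact h
  obtain ⟨x₀, hx₀⟩ := hSne
  obtain ⟨d, hd⟩ := (hDc.insert ⟨x₀, hx₀⟩).exists_eq_range (insert_nonempty _ _)
  have hdcover : ∀ z : ↥S, (z : ℝ) ∈ N → ∃ i, d i = z := by
    intro z hz
    have : z ∈ range d := hd ▸ mem_insert_of_mem _ hz
    exact this
  -- the dominating function g
  set g : ℕ → ℕ := fun n => max (m n) ((Finset.range (n + 1)).sup fun i => F (d i) n) with hg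
  -- key: every point is eventually in all sufficiently late members
  have hkey : ∀ z : ↥S, ∀ᶠ n in atTop, ∀ k, g n ≤ k → z ∈ E n k := by
    intro z
    by_cases hz : (z : ℝ) ∈ N
    · obtain ⟨i, hi⟩ := hdcover z hz
      filter_upwards [eventually_ge_atTop i] with n hn k hk
      apply hF z n
      have h1 : F (d i) n ≤ (Finset.range (n + 1)).sup fun j => F (d j) n :=
        Finset.le_sup (f := fun j => F (d j) n) (Finset.mem_range.mpr (Nat.lt_succ_of_le hn))
      rw [← hi]
      exact le_trans (le_trans h1 (le_max_right _ _)) hk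
    · have h1 : ∀ᶠ n in atTop, (z : ℝ) ∉ B n := by
        rw [hNdef, mem_limsup_iff_frequently_mem, not_frequently] at hz
        exact hz
      have h2 : ∀ᶠ n : ℕ in atTop, |(z : ℝ)| ≤ n + 1 := by
        filter_upwards [eventually_ge_atTop ⌈|(z : ℝ)|⌉₊] with n hn
        calc |(z : ℝ)| ≤ ⌈|(z : ℝ)|⌉₊ := Nat.le_ceil _
          _ ≤ (n : ℝ) := by exact_mod_cast hn
          _ ≤ n + 1 := by linarith
      filter_upwards [h1, h2] with n hBn habs k hk
      have hIcc : (z : ℝ) ∈ Icc (-(n + 1 : ℝ)) (n + 1) := by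
        rcases abs_le.mp habs with ⟨ha, hb⟩
        exact ⟨by linarith, hb⟩
      have hAz : (z : ℝ) ∈ A n (m n) := by
        by_contra h
        exact hBn ⟨⟨hSH z.2, hIcc⟩, h⟩
      exact (hmemA z n (m n)).mp hAz k (le_trans (le_max_left _ _) hk)
  -- injective selection
  obtain ⟨ks, hks_ge, hks_inj⟩ := exists_injective_selection E hEinj g
  refine ⟨fun n => E n (ks n), fun n => hEmem n (ks n), ?_, ?_, ?_⟩
  · exact infinite_range_of_injective hks_inj
  · rintro W ⟨n, rfl⟩
    exact hopen n (ks n)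
  · intro z
    have hsub : {W ∈ range fun n => E n (ks n) | z ∉ W} ⊆
        (fun n => E n (ks n)) '' {n | z ∉ E n (ks n)} := by
      rintro W ⟨⟨n, rfl⟩, hzW⟩
      exact ⟨n, hzW, rfl⟩
    refine Set.Finite.subset (Set.Finite.image _ ?_) hsub
    obtain ⟨M, hM⟩ := eventually_atTop.mp (hkey z)
    refine (finite_Iio M).subset ?_
    intro n hn
    simp only [mem_setOf_eq] at hn
    by_contra h
    exact hn (hM n (by simpa [Set.mem_Iio, not_lt] using h) (ks n) (hks_ge n))
end

section
/- Every Lusin set X ⊆ ℝ has the Rothberger property S_1(𝒪,𝒪). -/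
open Set Filter Topology TopologicalSpace

lemma frontier_nwd {W : Set ℝ} (hW : IsOpen W) : IsNowhereDense (closure W \ W) := by
  have hcl : IsClosed (closure W \ W) := isClosed_closure.sdiff hW
  rw [hcl.isNowhereDense_iff]
  by_contra h
  obtain ⟨x, hx⟩ := nonempty_iff_ne_empty.2 h
  have hop : IsOpen (interior (closure W \ W)) := isOpen_interior
  have h1 : interior (closure W \ W) ∩ closure W ⊆ closure (interior (closure W \ W) ∩ W) :=
    hop.inter_closure
  have h2 : interior (closure W \ W) ∩ W = ∅ := by
    apply eq_empty_of_subset_empty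
    rintro y ⟨hy1, hy2⟩
    exact (interior_subset hy1).2 hy2
  have h3 : x ∈ closure W := (interior_subset hx).1
  have := h1 ⟨hx, h3⟩
  rw [h2, closure_empty] at this
  exact this

/-- Every Lusin set has the Rothberger property. -/
theorem lusin_rothberger (X : Set ℝ) (hX : IsLusin X) :
    Rothberger ↥X := by
  intro 𝒰 h𝒰
  have hXne : X.Nonempty :=
    nonempty_iff_ne_empty.2 (fun h => hX.1 (h ▸ countable_empty))
  haveI : Nonempty ↥X := hXne.to_subtype
  -- countable dense subset of ↥X
  obtain ⟨D, hDc, hDd⟩ := TopologicalSpace.exists_countable_dense ↥X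
  have hDne : D.Nonempty := hDd.nonempty
  obtain ⟨d, hd⟩ := hDc.exists_eq_range hDne
  -- pick even-indexed selections covering d n
  have hpick : ∀ n, ∃ U ∈ 𝒰 (2 * n), d n ∈ U := by
    intro n
    have : (d n : ↥X) ∈ ⋃₀ 𝒰 (2 * n) := by rw [(h𝒰 (2 * n)).2]; trivial
    obtain ⟨U, hU, hdU⟩ := this
    exact ⟨U, hU, hdU⟩
  choose Ue hUe hdUe using hpick
  -- each Ue n is open in subtype: get W n open in ℝ
  have hopen : ∀ n, ∃ W : Set ℝ, IsOpen W ∧ Subtype.val ⁻¹' W = Ue n := by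
    intro n
    exact isOpen_induced_iff.1 ((h𝒰 (2 * n)).1 _ (hUe n))
  choose W hWopen hWeq using hopen
  set Wu := ⋃ n, W n with hWu
  have hWuOpen : IsOpen Wu := isOpen_iUnion hWopen
  -- the set of points of X not in Wu is countable
  have hS : {x : ↥X | (x : ℝ) ∉ Wu}.Countable := by
    have key : ∀ x : ↥X, (x : ℝ) ∉ Wu → (x : ℝ) ∈ X ∩ (closure Wu \ Wu) := by
      intro x hx
      refine ⟨x.2, ?_, hx⟩
      -- x ∈ closure of image of D, D maps into Wu
      have hxD : x ∈ closure D := by rw [hDd.closure_eq]; trivial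
      have : (x : ℝ) ∈ closure (Subtype.val '' D) :=
        (continuous_subtype_val.continuousOn.image_closure (Set.mem_image_of_mem _ hxD) :)
      refine closure_mono ?_ this
      rintro y ⟨z, hzD, rfl⟩
      rw [hd] at hzD
      obtain ⟨n, rfl⟩ := hzD
      have : d n ∈ Subtype.val ⁻¹' W n := by rw [hWeq]; exact hdUe n
      exact mem_iUnion.2 ⟨n, this⟩
    have hcnt : (X ∩ (closure Wu \ Wu)).Countable :=
      hX.2 _ (frontier_nwd hWuOpen)
    have : {x : ↥X | (x : ℝ) ∉ Wu} ⊆ Subtype.val ⁻¹' (X ∩ (closure Wu \ Wu)) :=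
      fun x hx => key x hx
    exact (hcnt.preimage Subtype.val_injective).mono this
  -- enumerate S (pad with an arbitrary point)
  obtain ⟨x₀⟩ := (inferInstance : Nonempty ↥X)
  have hS' : ({x : ↥X | (x : ℝ) ∉ Wu} ∪ {x₀}).Countable := hS.union (countable_singleton _)
  obtain ⟨e, he⟩ := hS'.exists_eq_range ⟨x₀, Or.inr rfl⟩
  have hpick2 : ∀ n, ∃ U ∈ 𝒰 (2 * n + 1), e n ∈ U := by
    intro n
    have : (e n : ↥X) ∈ ⋃₀ 𝒰 (2 * n + 1) := by rw [(h𝒰 (2 * n + 1)).2]; trivial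
    obtain ⟨U, hU, hdU⟩ := this
    exact ⟨U, hU, hdU⟩
  choose Uo hUo heUo using hpick2
  -- define the selection
  refine ⟨fun k => if Even k then Ue (k / 2) else Uo (k / 2), fun k => ?_, ?_⟩
  · show (if Even k then Ue (k / 2) else Uo (k / 2)) ∈ 𝒰 k
    by_cases hk : Even k
    · rw [if_pos hk]
      obtain ⟨m, hm⟩ := hk
      have h2 : 2 * (k / 2) = k := by omega
      have := hUe (k / 2)
      rwa [h2] at this
    · rw [if_neg hk]
      have hodd := Nat.not_even_iff.1 hk
      have h2 : 2 * (k / 2) + 1 = k := by omega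
      have := hUo (k / 2)
      rwa [h2] at this
  · apply eq_univ_of_forall
    intro x
    by_cases hx : (x : ℝ) ∈ Wu
    · obtain ⟨n, hn⟩ := mem_iUnion.1 hx
      have hxU : x ∈ Ue n := by rw [← hWeq n]; exact hn
      refine mem_iUnion.2 ⟨2 * n, ?_⟩
      show x ∈ if Even (2 * n) then Ue (2 * n / 2) else Uo (2 * n / 2)
      rw [if_pos ⟨n, by ring⟩]
      have : 2 * n / 2 = n := by omega
      rw [this]; exact hxU
    · have : x ∈ range e := by rw [← he]; exact Or.inl hx
      obtain ⟨n, rfl⟩ := this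
      refine mem_iUnion.2 ⟨2 * n + 1, ?_⟩
      show e n ∈ if Even (2 * n + 1) then Ue ((2 * n + 1) / 2) else Uo ((2 * n + 1) / 2)
      rw [if_neg (by simp [Nat.even_add_one, parity_simps])]
      have : (2 * n + 1) / 2 = n := by omega
      rw [this]; exact heUo n
end

section
/- If there exist both a Sierpiński set and a Lusin set of cardinality 2^{ℵ₀}, then 2^{ℵ₀} = ℵ₁. -/
open Set Filter Topology TopologicalSpace

/-
If `M` is meagre with null complement, then `S + M = ℝ` for every Sierpiński set `S`: otherwise
`S ⊆ z - Mᶜ` for some `z`, a null set. Taking `S` of size `ℵ₁` (an uncountable subset of a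
Sierpiński set is again one), every Lusin set `L` is covered by the `ℵ₁` translates `x + M`,
`x ∈ S`, each of which is meagre and so meets `L` in a countable set. Hence `|L| ≤ ℵ₁`.
-/

open MeasureTheory Cardinal Pointwise

lemma IsMeagre.vadd_set {G X : Type*} [AddGroup G] [AddAction G X] [TopologicalSpace X]
    [ContinuousConstVAdd G X] {M : Set X} (hM : IsMeagre M) (g : G) : IsMeagre (g +ᵥ M) := by
  rw [← neg_neg g, ← Set.preimage_vadd]
  exact hM.preimage_of_isOpenMap (continuous_const_vadd _) (isOpenMap_vadd _)

lemma Real.exists_isMeagre_null_compl : ∃ M : Set ℝ, IsMeagre M ∧ volume Mᶜ = 0 := by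
  obtain ⟨s, hs, t, ht, hst⟩ := Filter.disjoint_iff.mp Real.disjoint_residual_ae
  refine ⟨t, IsMeagre.mono hst.subset_compl_left ?_, mem_ae_iff.mp ht⟩
  rwa [IsMeagre, compl_compl]

lemma IsLusin.countable_inter_of_isMeagre {L M : Set ℝ} (hL : IsLusin L) (hM : IsMeagre M) :
    (L ∩ M).Countable := by
  obtain ⟨T, hT, hTc, hMT⟩ := isMeagre_iff_countable_union_isNowhereDense.mp hM
  refine (hTc.biUnion fun N hN ↦ hL.2 N (hT N hN)).mono ?_
  rw [← inter_iUnion₂, ← sUnion_eq_biUnion]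
  exact inter_subset_inter_right L hMT

lemma IsLusin.mk_le_mul_aleph0 {L S M : Set ℝ} (hL : IsLusin L) (hM : IsMeagre M)
    (hSM : S + M = Set.univ) : #L ≤ #S * ℵ₀ := by
  have hcover : L = ⋃ x ∈ S, L ∩ (x +ᵥ M) := by
    rw [← inter_iUnion₂, (Set.iUnion_vadd_set S M).trans hSM, inter_univ]
  calc #L = #(⋃ x ∈ S, L ∩ (x +ᵥ M)) := by rw [← hcover]
    _ ≤ #S * ⨆ x : S, #(L ∩ (x.1 +ᵥ M) : Set ℝ) := mk_biUnion_le _ S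
    _ ≤ #S * ℵ₀ := by
      gcongr
      exact ciSup_le' fun x ↦ le_aleph0_iff_set_countable.mpr
        (hL.countable_inter_of_isMeagre (hM.vadd_set x.1))

lemma IsSierpinski.subset {S T : Set ℝ} (hS : IsSierpinski S) (hTS : T ⊆ S)
    (hT : ¬ T.Countable) : IsSierpinski T :=
  ⟨hT, fun N hN ↦ (hS.2 N hN).mono (inter_subset_inter_left N hTS)⟩

lemma IsSierpinski.add_eq_univ {S M : Set ℝ} (hS : IsSierpinski S) (hM : volume Mᶜ = 0) :
    S + M = Set.univ := by
  refine eq_univ_of_forall fun z ↦ ?_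
  by_contra hz
  have hSsub : S ⊆ (z - ·) ⁻¹' Mᶜ := fun x hx hzx ↦
    hz ⟨x, hx, z - x, hzx, add_sub_cancel x z⟩
  have hnull : volume ((z - ·) ⁻¹' Mᶜ) = 0 :=
    (Measure.measurePreserving_sub_left volume z).quasiMeasurePreserving.preimage_null hM
  exact hS.1 ((hS.2 _ hnull).mono (subset_inter_iff.mpr ⟨subset_rfl, hSsub⟩))

/-- Rothberger: if there are both a Sierpiński set and a Lusin set of
cardinality `2^ℵ₀`, then `2^ℵ₀ = ℵ₁`. -/
theorem continuum_eq_aleph_one_of_sierpinski_and_lusin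
    (hS : ∃ S : Set ℝ, IsSierpinski S ∧ Cardinal.mk ↥S = Cardinal.continuum)
    (hL : ∃ L : Set ℝ, IsLusin L ∧ Cardinal.mk ↥L = Cardinal.continuum) :
    Cardinal.continuum = Cardinal.aleph 1 := by
  obtain ⟨S, hS, hScard⟩ := hS
  obtain ⟨L, hL, hLcard⟩ := hL
  obtain ⟨M, hM, hMc⟩ := Real.exists_isMeagre_null_compl
  obtain ⟨S₁, hS₁S, hS₁card⟩ : ∃ S₁ ⊆ S, #S₁ = ℵ₁ :=
    le_mk_iff_exists_subset.mp (hScard ▸ aleph_one_le_continuum)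
  have hS₁ : IsSierpinski S₁ := hS.subset hS₁S <| by
    rw [← le_aleph0_iff_set_countable, hS₁card, not_le]
    exact aleph0_lt_aleph_one
  have hle : 𝔠 ≤ ℵ₁ :=
    calc 𝔠 = #L := hLcard.symm
      _ ≤ #S₁ * ℵ₀ := hL.mk_le_mul_aleph0 hM (hS₁.add_eq_univ hMc)
      _ = ℵ₁ := by rw [hS₁card, mul_aleph0_eq aleph0_lt_aleph_one.le]
  -- the conclusion lives in an arbitrary universe, `hle` in `Cardinal.{0}`
  simpa using congrArg lift (hle.antisymm aleph_one_le_continuum)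
end
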